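/- arXiv:1205.1334 — 9 statements merged into one kernel-verified Lean document; each statement's English description precedes it below -/
import Mathlib

section
/- Let G be a randomly 3-dimensional graph. Then for every pair {u,v} of distinct vertices of G there exists exactly one pair {x,y} of distinct vertices with d(u,x) = d(u,y) and d(v,x) = d(v,y) (i.e., exactly one pair not resolved by {u,v}), and there exists exactly one pair {r,s} of distinct vertices with d(r,u) = d(r,v) and d(s,u) = d(s,v) (i.e., exactly one pair not resolving {u,v}). -/
/-- `S` is a resolving set of `G`: every pair of distinct vertices is resolved
by some vertex of `S`, i.e. some `u ∈ S` has different distances to the two vertices. -/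
def IsResolvingSet {V : Type*} (G : SimpleGraph V) (S : Set V) : Prop :=
  ∀ x y : V, x ≠ y → ∃ u ∈ S, G.dist u x ≠ G.dist u y

/-- The metric dimension of `G`: minimum size of a resolving set. -/
noncomputable def metricDim {V : Type*} [Fintype V] (G : SimpleGraph V) : ℕ :=
  sInf {k | ∃ S : Finset V, S.card = k ∧ IsResolvingSet G ↑S}

/-- The upper dimension of `G`: maximum size of a minimal resolving set. -/
noncomputable def upperDim {V : Type*} [Fintype V] (G : SimpleGraph V) : ℕ :=
  sSup {k | ∃ S : Finset V, S.card = k ∧ IsResolvingSet G ↑S ∧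
    ∀ T : Finset V, T ⊂ S → ¬ IsResolvingSet G ↑T}

/-- The resolving number of `G`: minimum `k` such that every `k`-subset of
the vertex set is a resolving set. -/
noncomputable def resolvingNumber {V : Type*} [Fintype V] (G : SimpleGraph V) : ℕ :=
  sInf {k | ∀ S : Finset V, S.card = k → IsResolvingSet G ↑S}

set_option maxHeartbeats 1000000

open Classical in
noncomputable def NQ {V : Type*} [Fintype V] (G : SimpleGraph V) (Q : Finset V) : Finset V :=
  Finset.univ.filter (fun w => ∀ x ∈ Q, ∀ y ∈ Q, G.dist w x = G.dist w y)

lemma mem_NQ {V : Type*} [Fintype V] {G : SimpleGraph V} {Q : Finset V} {w : V} :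
    w ∈ NQ G Q ↔ ∀ x ∈ Q, ∀ y ∈ Q, G.dist w x = G.dist w y := by
  simp [NQ]

lemma mem_NQ_pair {V : Type*} [Fintype V] [DecidableEq V] {G : SimpleGraph V} {x y w : V}
    (h : G.dist w x = G.dist w y) : w ∈ NQ G ({x, y} : Finset V) := by
  rw [mem_NQ]
  simp only [Finset.mem_insert, Finset.mem_singleton]
  rintro a (rfl|rfl) b (rfl|rfl)
  · rfl
  · exact h
  · exact h.symm
  · rfl

lemma card_NQ_le {V : Type*} [Fintype V] [DecidableEq V] {G : SimpleGraph V}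
    (h3 : ∀ S : Finset V, S.card = 3 → IsResolvingSet G ↑S)
    {Q : Finset V} (hQ : Q.card = 2) : (NQ G Q).card ≤ 2 := by
  by_contra h
  push_neg at h
  obtain ⟨T, hTsub, hTcard⟩ := Finset.exists_subset_card_eq (show 3 ≤ _ from h)
  obtain ⟨x, y, hxy, hQeq⟩ := Finset.card_eq_two.mp hQ
  obtain ⟨u, hu, hne⟩ := h3 T hTcard x y hxy
  have hmem := mem_NQ.mp (hTsub hu)
  exact hne (hmem x (by simp [hQeq]) y (by simp [hQeq]))

/-- in a randomly 3-dimensional graph, every pair of distinct vertices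
`{u,v}` fails to resolve exactly one pair `{x,y}`, and is not resolved by exactly
one pair `{r,s}`. -/
theorem stmt1 {V : Type*} [Fintype V] [DecidableEq V] (G : SimpleGraph V)
    (hconn : G.Connected) (hdim : metricDim G = 3) (hres : resolvingNumber G = 3) :
    ∀ u v : V, u ≠ v →
      ((∃ x y : V, x ≠ y ∧ G.dist u x = G.dist u y ∧ G.dist v x = G.dist v y ∧
        ∀ x' y' : V, x' ≠ y' → G.dist u x' = G.dist u y' → G.dist v x' = G.dist v y' →
          ({x', y'} : Finset V) = {x, y}) ∧
      (∃ r s : V, r ≠ s ∧ G.dist r u = G.dist r v ∧ G.dist s u = G.dist s v ∧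
        ∀ r' s' : V, r' ≠ s' → G.dist r' u = G.dist r' v → G.dist s' u = G.dist s' v →
          ({r', s'} : Finset V) = {r, s})) := by
  classical
  -- every 3-set resolves
  have h3 : ∀ S : Finset V, S.card = 3 → IsResolvingSet G ↑S := by
    have hne : {k | ∀ S : Finset V, S.card = k → IsResolvingSet G ↑S}.Nonempty := by
      by_contra h
      rw [Set.not_nonempty_iff_eq_empty] at h
      unfold resolvingNumber at hres
      rw [h, Nat.sInf_empty] at hres
      exact absurd hres (by norm_num)
    have := Nat.sInf_mem hne
    rwa [show sInf {k | ∀ S : Finset V, S.card = k → IsResolvingSet G ↑S} = 3 from hres] at this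
  -- no 2-set resolves
  have h2 : ∀ S : Finset V, S.card = 2 → ¬ IsResolvingSet G ↑S := by
    intro S hS hrs
    have : metricDim G ≤ 2 := Nat.sInf_le ⟨S, hS, hrs⟩
    omega
  -- for every 2-set P, there is a 2-set Q with P ⊆ NQ G Q
  have hφex : ∀ P : {s : Finset V // s.card = 2},
      ∃ Q : {s : Finset V // s.card = 2}, (P : Finset V) ⊆ NQ G (Q : Finset V) := by
    rintro ⟨P, hP⟩
    have := h2 P hP
    unfold IsResolvingSet at this
    push_neg at this
    obtain ⟨x, y, hxy, hall⟩ := this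
    refine ⟨⟨{x, y}, Finset.card_pair hxy⟩, ?_⟩
    intro w hw
    exact mem_NQ_pair (hall w (by exact_mod_cast hw))
  choose φ hφ using hφex
  have hinj : Function.Injective φ := by
    intro P1 P2 h
    have h1 := hφ P1
    rw [h] at h1
    have h2' := hφ P2
    have hc := card_NQ_le h3 (φ P2).2
    have e1 : (P1 : Finset V) = NQ G ((φ P2 : _) : Finset V) :=
      Finset.eq_of_subset_of_card_le h1 (by rw [P1.2]; exact hc)
    have e2 : (P2 : Finset V) = NQ G ((φ P2 : _) : Finset V) :=
      Finset.eq_of_subset_of_card_le h2' (by rw [P2.2]; exact hc)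
    exact Subtype.ext (e1.trans e2.symm)
  have hsurj : Function.Surjective φ := (Finite.injective_iff_bijective.mp hinj).2
  have hNeq : ∀ P : {s : Finset V // s.card = 2}, NQ G ((φ P : _) : Finset V) = (P : Finset V) := by
    intro P
    exact (Finset.eq_of_subset_of_card_le (hφ P) (by rw [P.2]; exact card_NQ_le h3 (φ P).2)).symm
  -- uniqueness of failed pair
  have huniqQ : ∀ (P Q1 Q2 : {s : Finset V // s.card = 2}),
      (P : Finset V) ⊆ NQ G (Q1 : Finset V) → (P : Finset V) ⊆ NQ G (Q2 : Finset V) →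
      Q1 = Q2 := by
    intro P Q1 Q2 hs1 hs2
    obtain ⟨P1, rfl⟩ := hsurj Q1
    obtain ⟨P2, rfl⟩ := hsurj Q2
    rw [hNeq P1] at hs1
    rw [hNeq P2] at hs2
    have e1 : (P : Finset V) = (P1 : Finset V) :=
      Finset.eq_of_subset_of_card_le hs1 (by rw [P.2, P1.2])
    have e2 : (P : Finset V) = (P2 : Finset V) :=
      Finset.eq_of_subset_of_card_le hs2 (by rw [P.2, P2.2])
    exact congrArg φ (Subtype.ext (e1.symm.trans e2))
  intro u v huv
  have hc : ({u, v} : Finset V).card = 2 := Finset.card_pair huv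
  constructor
  · -- part a
    obtain ⟨x, y, hxy, hQeq⟩ := Finset.card_eq_two.mp (φ ⟨{u, v}, hc⟩).2
    have hu : u ∈ NQ G ((φ ⟨{u, v}, hc⟩ : _) : Finset V) :=
      hφ ⟨{u, v}, hc⟩ (by simp : u ∈ ({u, v} : Finset V))
    have hv : v ∈ NQ G ((φ ⟨{u, v}, hc⟩ : _) : Finset V) :=
      hφ ⟨{u, v}, hc⟩ (by simp : v ∈ ({u, v} : Finset V))
    rw [mem_NQ] at hu hv
    refine ⟨x, y, hxy, hu x (by simp [hQeq]) y (by simp [hQeq]),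
      hv x (by simp [hQeq]) y (by simp [hQeq]), ?_⟩
    intro x' y' hxy' hux hvx
    have hsub : ({u, v} : Finset V) ⊆ NQ G ({x', y'} : Finset V) := by
      intro w hw
      simp only [Finset.mem_insert, Finset.mem_singleton] at hw
      rcases hw with rfl | rfl
      · exact mem_NQ_pair hux
      · exact mem_NQ_pair hvx
    have hQe := huniqQ ⟨{u, v}, hc⟩ ⟨{x', y'}, Finset.card_pair hxy'⟩ (φ ⟨{u, v}, hc⟩)
      hsub (hφ ⟨{u, v}, hc⟩)
    have := congrArg Subtype.val hQe
    simp only at this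
    rw [this, hQeq]
  · -- part b
    obtain ⟨P, hPQ⟩ := hsurj ⟨{u, v}, hc⟩
    have hN : NQ G ({u, v} : Finset V) = (P : Finset V) := by
      have := hNeq P
      rw [hPQ] at this
      exact this
    obtain ⟨r, s, hrs, hPeq⟩ := Finset.card_eq_two.mp P.2
    have hr : r ∈ NQ G ({u, v} : Finset V) := by rw [hN, hPeq]; simp
    have hs : s ∈ NQ G ({u, v} : Finset V) := by rw [hN, hPeq]; simp
    rw [mem_NQ] at hr hs
    refine ⟨r, s, hrs, hr u (by simp) v (by simp), hs u (by simp) v (by simp), ?_⟩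
    intro r' s' hrs' hr' hs'
    have hsub : ({r', s'} : Finset V) ⊆ NQ G ({u, v} : Finset V) := by
      intro w hw
      simp only [Finset.mem_insert, Finset.mem_singleton] at hw
      rcases hw with rfl | rfl
      · exact mem_NQ_pair hr'
      · exact mem_NQ_pair hs'
    rw [hN] at hsub
    have := Finset.eq_of_subset_of_card_le hsub (by rw [Finset.card_pair hrs', P.2])
    rw [this]; exact hPeq
end

section
/- Let G be a randomly 3-dimensional graph of order n. Then every vertex u of G satisfies Σ_{i=1}^{ecc(u)} C(|N_i(u)|, 2) = n − 1, where C(m,2) denotes the binomial coefficient m choose 2. -/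
/-!
For a pair `p = {x, y}` let `F p` be the set of vertices that do not resolve it. Since every
3-set is resolving, `|F p| ≤ 2`; since no 2-set is resolving, every 2-set lies in some `F p`.
There are as many pairs as 2-sets, so `p ↦ F p` is a bijection between them. The sum counts the
pairs `p` with `u ∈ F p`, hence equals the number of 2-sets containing `u`, which is `n - 1`.
-/

open Finset

section Combinatorics

variable {α β : Type*} [DecidableEq α]

theorem sum_choose_card_fiber_eq_card_filter_powersetCard [DecidableEq β] {k : ℕ} (hk : 0 < k)
    (s : Finset α) {t : Finset β} (f : α → β) (hf : ∀ a ∈ s, f a ∈ t) :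
    ∑ i ∈ t, (#{a ∈ s | f a = i}).choose k =
      #{S ∈ s.powersetCard k | ∀ x ∈ S, ∀ y ∈ S, f x = f y} := by
  have hunion : {S ∈ s.powersetCard k | ∀ x ∈ S, ∀ y ∈ S, f x = f y} =
      t.biUnion fun i => {a ∈ s | f a = i}.powersetCard k := by
    ext S
    simp only [mem_filter, mem_powersetCard, mem_biUnion, subset_iff]
    constructor
    · rintro ⟨⟨hSs, hSk⟩, hconst⟩
      obtain ⟨x, hx⟩ := card_pos.mp (hSk ▸ hk)
      exact ⟨f x, hf x (hSs hx), fun y hy => ⟨hSs hy, hconst y hy x hx⟩, hSk⟩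
    · rintro ⟨i, -, hSi, hSk⟩
      exact ⟨⟨fun a ha => (hSi ha).1, hSk⟩, fun x hx y hy => (hSi hx).2.trans (hSi hy).2.symm⟩
  have hdisj : (t : Set β).PairwiseDisjoint fun i => {a ∈ s | f a = i}.powersetCard k := by
    intro i _ j _ hij
    refine disjoint_left.mpr fun S hSi hSj => ?_
    rw [mem_powersetCard] at hSi hSj
    obtain ⟨x, hx⟩ := card_pos.mp (hSi.2 ▸ hk)
    exact hij ((mem_filter.mp (hSi.1 hx)).2.symm.trans (mem_filter.mp (hSj.1 hx)).2)
  simp only [hunion, card_biUnion hdisj, card_powersetCard]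

variable [Fintype α]

theorem image_eq_powersetCard_and_injOn_of_forall_subset {s : Finset β} {F : β → Finset α}
    {k : ℕ} (hle : ∀ p ∈ s, #(F p) ≤ k) (hcover : ∀ S : Finset α, #S = k → ∃ p ∈ s, S ⊆ F p)
    (hcard : #s ≤ (Fintype.card α).choose k) :
    s.image F = univ.powersetCard k ∧ Set.InjOn F s := by
  have hsub : univ.powersetCard k ⊆ s.image F := by
    intro S hS
    obtain ⟨p, hp, hSp⟩ := hcover S (mem_powersetCard.mp hS).2
    have hSk := (mem_powersetCard.mp hS).2
    exact mem_image.mpr ⟨p, hp, (eq_of_subset_of_card_le hSp (hSk ▸ hle p hp)).symm⟩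
  have hcard' : #(univ.powersetCard k : Finset (Finset α)) = (Fintype.card α).choose k := by
    rw [card_powersetCard, card_univ]
  have himage : #(s.image F) = #s :=
    le_antisymm card_image_le (hcard.trans (hcard' ▸ card_le_card hsub))
  exact ⟨(eq_of_subset_of_card_le hsub (by omega)).symm, injOn_of_card_image_eq himage⟩

theorem card_filter_mem_of_image_eq_powersetCard {s : Finset β} {F : β → Finset α} {k : ℕ}
    (himage : s.image F = univ.powersetCard (k + 1)) (hinj : Set.InjOn F s) (u : α) :
    #{p ∈ s | u ∈ F p} = (Fintype.card α - 1).choose k := by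
  calc #{p ∈ s | u ∈ F p}
      = #({p ∈ s | u ∈ F p}.image F) :=
        (card_image_of_injOn (hinj.mono fun p hp => (mem_filter.mp hp).1)).symm
    _ = #{S ∈ univ.powersetCard (k + 1) | u ∈ S} := by rw [← himage, filter_image]
    _ = (Fintype.card α - 1).choose k := by
        simpa using card_filter_powersetCard_subset {u} univ (k + 1) (subset_univ _) (by simp)

end Combinatorics

section Resolving

variable {V : Type*} [Fintype V] (G : SimpleGraph V)

theorem metricDim_le_card {S : Finset V} (hS : IsResolvingSet G S) : metricDim G ≤ #S :=
  Nat.sInf_le ⟨S, rfl, hS⟩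

theorem isResolvingSet_of_card_eq_resolvingNumber (h : resolvingNumber G ≠ 0) {S : Finset V}
    (hS : #S = resolvingNumber G) : IsResolvingSet G S :=
  Nat.sInf_mem (Nat.nonempty_of_pos_sInf (Nat.pos_of_ne_zero h)) S hS

variable [DecidableEq V]

noncomputable def nonResolvers (p : Finset V) : Finset V :=
  {w | ∀ x ∈ p, ∀ y ∈ p, G.dist w x = G.dist w y}

@[simp]
theorem mem_nonResolvers {p : Finset V} {w : V} :
    w ∈ nonResolvers G p ↔ ∀ x ∈ p, ∀ y ∈ p, G.dist w x = G.dist w y := by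
  simp [nonResolvers]

theorem card_nonResolvers_lt {k : ℕ} (h : ∀ S : Finset V, #S = k → IsResolvingSet G S)
    {p : Finset V} (hp : 1 < #p) : #(nonResolvers G p) < k := by
  by_contra! hk
  obtain ⟨S, hSF, hSk⟩ := exists_subset_card_eq hk
  obtain ⟨x, hx, y, hy, hxy⟩ := one_lt_card.mp hp
  obtain ⟨w, hwS, hw⟩ := h S hSk x y hxy
  exact hw ((mem_nonResolvers G).mp (hSF hwS) x hx y hy)

theorem exists_subset_nonResolvers {S : Finset V} (hS : ¬ IsResolvingSet G S) :
    ∃ p : Finset V, #p = 2 ∧ S ⊆ nonResolvers G p := by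
  simp only [IsResolvingSet, not_forall, not_exists, not_and, not_not] at hS
  obtain ⟨x, y, hxy, hall⟩ := hS
  refine ⟨{x, y}, card_pair hxy, fun w hw => ?_⟩
  simp [hall w hw]

end Resolving

theorem stmt2_general {V : Type*} [Fintype V] (G : SimpleGraph V)
    (hconn : G.Connected) (hdim : metricDim G = 3) (hres : resolvingNumber G = 3)
    (n : ℕ) (hn : Fintype.card V = n) :
    ∀ u : V,
      ∑ i ∈ Finset.Icc 1 (Finset.univ.sup fun v => G.dist u v),
        ((Finset.univ.filter fun v => G.dist u v = i).card).choose 2 = n - 1 := by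
  classical
  intro u
  have hle : ∀ p ∈ univ.powersetCard 2, #(nonResolvers G p) ≤ 2 := fun p hp =>
    Nat.lt_succ_iff.mp <| card_nonResolvers_lt G
      (fun S hS => isResolvingSet_of_card_eq_resolvingNumber G (by omega) (by omega))
      (by rw [(mem_powersetCard.mp hp).2]; norm_num)
  have hcover : ∀ S : Finset V, #S = 2 → ∃ p ∈ univ.powersetCard 2, S ⊆ nonResolvers G p := by
    intro S hS
    obtain ⟨p, hp, hSp⟩ :=
      exists_subset_nonResolvers G (S := S) fun h => absurd (metricDim_le_card G h) (by omega)
    exact ⟨p, by simpa using hp, hSp⟩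
  obtain ⟨himage, hinj⟩ := image_eq_powersetCard_and_injOn_of_forall_subset hle hcover (by simp)
  have hdist_mem : ∀ v ∈ (univ : Finset V),
      G.dist u v ∈ insert 0 (Icc 1 (univ.sup fun v => G.dist u v)) := by
    intro v _
    have := le_sup (f := fun v => G.dist u v) (mem_univ v)
    simp only [mem_insert, mem_Icc]
    omega
  have hsphere_zero : #{v | G.dist u v = 0} = 1 := by
    simp [hconn.dist_eq_zero_iff, filter_eq]
  calc ∑ i ∈ Icc 1 (univ.sup fun v => G.dist u v), (#{v | G.dist u v = i}).choose 2
      = ∑ i ∈ insert 0 (Icc 1 (univ.sup fun v => G.dist u v)),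
          (#{v | G.dist u v = i}).choose 2 := by
        rw [sum_insert (by simp), hsphere_zero]; simp
    _ = #{p ∈ univ.powersetCard 2 | u ∈ nonResolvers G p} := by
        -- the two filters differ only in their decidability instances
        convert sum_choose_card_fiber_eq_card_filter_powersetCard two_pos univ _ hdist_mem using 2
        ext p
        simp
    _ = n - 1 := by
        rw [card_filter_mem_of_image_eq_powersetCard himage hinj, hn]; simp

/-- in a randomly 3-dimensional graph of order `n`, every vertex `u`
satisfies `∑_{i=1}^{ecc(u)} C(|N_i(u)|, 2) = n - 1`, where `N_i(u)` is the set of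
vertices at distance `i` from `u` and `ecc(u)` is the eccentricity of `u`. -/
theorem stmt2 {V : Type*} [Fintype V] [DecidableEq V] (G : SimpleGraph V)
    (hconn : G.Connected) (hdim : metricDim G = 3) (hres : resolvingNumber G = 3)
    (n : ℕ) (hn : Fintype.card V = n) :
    ∀ u : V,
      ∑ i ∈ Finset.Icc 1 (Finset.univ.sup fun v => G.dist u v),
        ((Finset.univ.filter fun v => G.dist u v = i).card).choose 2 = n - 1 :=
  stmt2_general G hconn hdim hres n hn
end

section
/- Let G be a randomly 3-dimensional graph. Then G is isomorphic to the complete graph K_4. -/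
/-!
Since every 3-set of vertices resolves `G` and no 2-set does, sending a pair of vertices to the
set of vertices equidistant from it permutes the 2-subsets of `V`. Hence two distinct vertices are
both equidistant from exactly one pair, and counting the pairs equidistant from a vertex `z` gives
`∑ⱼ C(mⱼ, 2) = ∑ⱼ mⱼ = n - 1`, where `mⱼ` is the number of vertices at distance `j ≥ 1` from `z`.

A leaf `z` with neighbour `a` is impossible, as no vertex is equidistant from `z` and `a`.
If `z` has exactly two neighbours `a, b`, the pair that `a` and `b` leave unresolved must be
`{z, y}` (otherwise `z` would not resolve it either), with `y` adjacent to `a` and `b`. As `{a, b}`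
is the only pair left unresolved by both `z` and `y`, distances from `y` separate the points of
every sphere about `z` of radius `j ≥ 2`, and there they take only the values `j - 2` and `j - 1`.
So all spheres about `z` have at most two points, and the count fails.

So all degrees are at least 3. Two vertices `x, z` at maximal distance `D ≥ 3` would then each
have two neighbours equidistant from the other, giving two different pairs left unresolved by
both `x` and `z`. Hence the diameter is at most 2, and the count at `z` reads
`C(d, 2) + C(n - 1 - d, 2) = n - 1` with `d = deg z ≥ 3`, forcing `d = 3` and `n ∈ {4, 7}`.
A 3-regular graph has an even number of vertices, so `n = 4` and `G = K₄`.
-/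

open Finset

theorem Finset.card_filter_powersetCard_two_eq_sum_choose {α β : Type*} [DecidableEq α]
    [DecidableEq β] (f : α → β) {s : Finset α} {t : Finset β} (hst : ∀ a ∈ s, f a ∈ t) :
    #{p ∈ s.powersetCard 2 | ∀ x ∈ p, ∀ y ∈ p, f x = f y} =
      ∑ b ∈ t, (#{a ∈ s | f a = b}).choose 2 := by
  have hfib : {p ∈ s.powersetCard 2 | ∀ x ∈ p, ∀ y ∈ p, f x = f y} =
      t.biUnion fun b => {a ∈ s | f a = b}.powersetCard 2 := by
    ext p
    simp only [mem_filter, mem_powersetCard, mem_biUnion, subset_iff]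
    constructor
    · rintro ⟨⟨hps, hp⟩, hf⟩
      obtain ⟨x, hx⟩ := card_pos.mp (hp ▸ two_pos)
      exact ⟨f x, hst x (hps hx), fun y hy => ⟨hps hy, hf y hy x hx⟩, hp⟩
    · rintro ⟨b, -, hpb, hp⟩
      refine ⟨⟨fun x hx => (hpb hx).1, hp⟩, fun x hx y hy => ?_⟩
      rw [(hpb hx).2, (hpb hy).2]
  rw [hfib, card_biUnion]
  · simp only [card_powersetCard]
  · intro b _ b' _ hbb'
    refine disjoint_left.mpr fun p hp hp' => ?_
    obtain ⟨x, hx⟩ := card_pos.mp ((mem_powersetCard.mp hp).2 ▸ two_pos)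
    exact hbb' (((mem_filter.mp ((mem_powersetCard.mp hp).1 hx)).2).symm.trans
      (mem_filter.mp ((mem_powersetCard.mp hp').1 hx)).2)

theorem Nat.eq_three_of_choose_two_add_choose_two {d m : ℕ} (hd : 3 ≤ d)
    (h : d.choose 2 + m.choose 2 = d + m) : d = 3 ∧ (m = 0 ∨ m = 3) := by
  have hq : (d : ℤ) * (d - 3) + m * (m - 3) = 0 := by
    have h' := congrArg (Nat.cast (R := ℚ)) h
    push_cast [Nat.cast_choose_two] at h'
    have : (((d : ℤ) * (d - 3) + m * (m - 3) : ℤ) : ℚ) = 0 := by push_cast; linarith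
    exact_mod_cast this
  -- `m (m - 3) = (m - 1) (m - 2) - 2 ≥ -2`, while `d (d - 3) ≥ 4` once `d ≥ 4`
  have hm : (0 : ℤ) ≤ (m - 1) * (m - 2) := by
    rcases le_or_gt m 1 with hm | hm
    · exact mul_nonneg_of_nonpos_of_nonpos (by omega) (by omega)
    · exact mul_nonneg (by omega) (by omega)
  obtain rfl : d = 3 := by
    have : (d : ℤ) ≤ 3 := by nlinarith
    omega
  have : (m : ℤ) * (m - 3) = 0 := by push_cast at hq; linarith
  rcases Int.mul_eq_zero.mp this with h0 | h3
  · exact ⟨rfl, .inl (by omega)⟩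
  · exact ⟨rfl, .inr (by omega)⟩

theorem nontrivial_of_metricDim_ne_zero {V : Type*} [Fintype V] {G : SimpleGraph V}
    (h : metricDim G ≠ 0) : Nontrivial V := by
  by_contra hV
  rw [not_nontrivial_iff_subsingleton] at hV
  exact h (Nat.sInf_eq_zero.mpr
    (.inl ⟨∅, card_empty, fun x y hxy => absurd (Subsingleton.elim x y) hxy⟩))

namespace SimpleGraph

section Distance

variable {V : Type*} {G : SimpleGraph V}

theorem Connected.dist_le_dist_add_one_of_adj (hG : G.Connected) {y c : V} (hyc : G.Adj y c)
    (x : V) : G.dist y x ≤ G.dist c x + 1 := by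
  calc G.dist y x ≤ G.dist y c + G.dist c x := hG.dist_triangle
    _ = G.dist c x + 1 := by rw [dist_eq_one_iff_adj.mpr hyc, add_comm]

theorem Connected.exists_adj_dist_eq_add_one (hG : G.Connected) {z x : V} (hxz : x ≠ z) :
    ∃ c, G.Adj z c ∧ G.dist z x = G.dist c x + 1 := by
  obtain ⟨w, hw⟩ := hG.exists_walk_length_eq_dist z x
  cases w with
  | nil => exact absurd rfl hxz
  | @cons _ c _ hzc q =>
    refine ⟨c, hzc, le_antisymm (hG.dist_le_dist_add_one_of_adj hzc x) ?_⟩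
    rw [← hw, Walk.length_cons]
    exact Nat.succ_le_succ (dist_le q)

theorem Connected.dist_le_dist_of_neighborSet_subset (hG : G.Connected) {y z x : V}
    (h : G.neighborSet z ⊆ G.neighborSet y) (hxz : x ≠ z) : G.dist y x ≤ G.dist z x := by
  obtain ⟨c, hzc, hc⟩ := hG.exists_adj_dist_eq_add_one hxz
  exact hc ▸ hG.dist_le_dist_add_one_of_adj (h hzc) x

theorem Connected.dist_eq_of_forall_adj_dist_eq (hG : G.Connected) {z x y : V}
    (h : ∀ c, G.Adj z c → G.dist c x = G.dist c y) (hxz : x ≠ z) (hyz : y ≠ z) :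
    G.dist z x = G.dist z y := by
  obtain ⟨c, hzc, hc⟩ := hG.exists_adj_dist_eq_add_one hxz
  obtain ⟨c', hzc', hc'⟩ := hG.exists_adj_dist_eq_add_one hyz
  have := hG.dist_le_dist_add_one_of_adj hzc y
  have := hG.dist_le_dist_add_one_of_adj hzc' x
  have := h c hzc
  have := h c' hzc'
  omega

end Distance

variable {V : Type*} [Fintype V] {G : SimpleGraph V}

theorem Connected.exists_adj_ne_dist_eq_of_forall_dist_le (hG : G.Connected) [DecidableRel G.Adj]
    {x z : V} (hmax : ∀ u v, G.dist u v ≤ G.dist x z) (hdeg : 3 ≤ G.degree x) :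
    ∃ c₁ c₂, c₁ ≠ c₂ ∧ G.Adj x c₁ ∧ G.Adj x c₂ ∧ G.dist c₁ z = G.dist c₂ z := by
  have hmaps : ∀ c ∈ G.neighborFinset x,
      G.dist c z ∈ ({G.dist x z - 1, G.dist x z} : Finset ℕ) := by
    intro c hc
    have := hG.dist_le_dist_add_one_of_adj ((mem_neighborFinset _ _ _).mp hc) z
    have := hmax c z
    simp only [mem_insert, mem_singleton]
    omega
  have hcard : #({G.dist x z - 1, G.dist x z} : Finset ℕ) < #(G.neighborFinset x) := by
    rw [card_neighborFinset_eq_degree]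
    exact card_le_two.trans_lt hdeg
  obtain ⟨c₁, h₁, c₂, h₂, hne, heq⟩ := exists_ne_map_eq_of_card_lt_of_maps_to hcard hmaps
  exact ⟨c₁, c₂, hne, (mem_neighborFinset _ _ _).mp h₁, (mem_neighborFinset _ _ _).mp h₂, heq⟩

variable (G) in
noncomputable def equidistantSet (p : Finset V) : Finset V :=
  {u | ∀ x ∈ p, ∀ y ∈ p, G.dist u x = G.dist u y}

theorem mem_equidistantSet {u : V} {p : Finset V} :
    u ∈ G.equidistantSet p ↔ ∀ x ∈ p, ∀ y ∈ p, G.dist u x = G.dist u y := by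
  simp [equidistantSet]

variable (G) in
noncomputable def sphere (z : V) (j : ℕ) : Finset V :=
  {x | G.dist z x = j}

@[simp]
theorem mem_sphere {z x : V} {j : ℕ} : x ∈ G.sphere z j ↔ G.dist z x = j := by
  simp [sphere]

theorem Connected.sphere_zero (hG : G.Connected) (z : V) : G.sphere z 0 = {z} := by
  ext x
  simp [hG.dist_eq_zero_iff, eq_comm]

theorem sphere_one [DecidableRel G.Adj] (z : V) : G.sphere z 1 = G.neighborFinset z := by
  ext x
  simp

theorem Connected.sum_card_sphere (hG : G.Connected) {z : V} {t : Finset ℕ} (ht0 : 0 ∉ t)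
    (ht : ∀ x, x ≠ z → G.dist z x ∈ t) :
    ∑ j ∈ t, #(G.sphere z j) = Fintype.card V - 1 := by
  have hmaps : ∀ x ∈ (univ : Finset V), G.dist z x ∈ insert 0 t := by
    intro x _
    by_cases hxz : x = z
    · simp [hxz]
    · exact mem_insert_of_mem (ht x hxz)
  have h := card_eq_sum_card_fiberwise hmaps
  rw [sum_insert ht0, card_univ] at h
  have h0 : #(G.sphere z 0) = 1 := by rw [hG.sphere_zero]; rfl
  unfold sphere at h0 ⊢
  omega

structure RandomlyThreeDimensional (G : SimpleGraph V) : Prop where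
  resolving_of_card_eq_three : ∀ S : Finset V, #S = 3 → IsResolvingSet G ↑S
  not_resolving_of_card_eq_two : ∀ S : Finset V, #S = 2 → ¬ IsResolvingSet G ↑S

theorem RandomlyThreeDimensional.of_metricDim_eq_three (hdim : metricDim G = 3)
    (hres : resolvingNumber G = 3) : G.RandomlyThreeDimensional where
  resolving_of_card_eq_three := by
    have hne : {k | ∀ S : Finset V, #S = k → IsResolvingSet G ↑S}.Nonempty :=
      ⟨Fintype.card V + 1, fun S hS => absurd (card_le_univ S) (by omega)⟩
    exact hres ▸ Nat.sInf_mem hne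
  not_resolving_of_card_eq_two S hS hSres := by
    have : metricDim G ≤ 2 := Nat.sInf_le ⟨S, hS, hSres⟩
    omega

variable [DecidableEq V]

theorem mem_equidistantSet_pair {u x y : V} :
    u ∈ G.equidistantSet {x, y} ↔ G.dist u x = G.dist u y := by
  simp only [mem_equidistantSet, mem_insert, mem_singleton]
  constructor
  · exact fun h => h x (.inl rfl) y (.inr rfl)
  · rintro h a (rfl | rfl) b (rfl | rfl) <;> first | rfl | exact h | exact h.symm

theorem mem_equidistantSet_pair_of_adj {u x y : V} (hx : G.Adj u x) (hy : G.Adj u y) :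
    u ∈ G.equidistantSet {x, y} := by
  rw [mem_equidistantSet_pair, dist_eq_one_iff_adj.mpr hx, dist_eq_one_iff_adj.mpr hy]

namespace RandomlyThreeDimensional

theorem card_equidistantSet_le_two (hR : G.RandomlyThreeDimensional) {p : Finset V}
    (hp : #p = 2) : #(G.equidistantSet p) ≤ 2 := by
  by_contra! h
  obtain ⟨S, hS, hS3⟩ := exists_subset_card_eq h
  obtain ⟨x, y, hxy, rfl⟩ := card_eq_two.mp hp
  obtain ⟨u, hu, hne⟩ := hR.resolving_of_card_eq_three S hS3 x y hxy
  exact hne (mem_equidistantSet_pair.mp (hS hu))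

theorem exists_equidistantSet_eq (hR : G.RandomlyThreeDimensional) {q : Finset V}
    (hq : #q = 2) : ∃ p, #p = 2 ∧ G.equidistantSet p = q := by
  have h := hR.not_resolving_of_card_eq_two q hq
  simp only [IsResolvingSet, not_forall, not_exists, not_and, not_not, mem_coe] at h
  obtain ⟨x, y, hxy, hq'⟩ := h
  refine ⟨{x, y}, card_pair hxy, (eq_of_subset_of_card_le
    (fun u hu => mem_equidistantSet_pair.mpr (hq' u hu)) ?_).symm⟩
  rw [hq]
  exact hR.card_equidistantSet_le_two (card_pair hxy)

theorem bijOn_equidistantSet (hR : G.RandomlyThreeDimensional) :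
    Set.BijOn G.equidistantSet (↑((univ : Finset V).powersetCard 2) : Set (Finset V))
      ↑((univ : Finset V).powersetCard 2) := by
  rw [← image_eq_iff_bijOn_of_card le_rfl]
  refine (eq_of_subset_of_card_le (fun q hq => ?_) card_image_le).symm
  obtain ⟨p, hp, rfl⟩ := hR.exists_equidistantSet_eq (mem_powersetCard.mp hq).2
  exact mem_image_of_mem _ (mem_powersetCard.mpr ⟨subset_univ _, hp⟩)

theorem card_equidistantSet (hR : G.RandomlyThreeDimensional) {p : Finset V} (hp : #p = 2) :
    #(G.equidistantSet p) = 2 := by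
  have := hR.bijOn_equidistantSet.mapsTo (mem_coe.mpr (mem_powersetCard.mpr ⟨subset_univ p, hp⟩))
  exact (mem_powersetCard.mp (mem_coe.mp this)).2

theorem eq_of_pair_subset_equidistantSet (hR : G.RandomlyThreeDimensional) {p p' : Finset V}
    (hp : #p = 2) (hp' : #p' = 2) {u w : V} (huw : u ≠ w) (h : {u, w} ⊆ G.equidistantSet p)
    (h' : {u, w} ⊆ G.equidistantSet p') : p = p' := by
  have key : ∀ {p : Finset V}, #p = 2 → {u, w} ⊆ G.equidistantSet p →
      G.equidistantSet p = {u, w} := fun hp h =>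
    (eq_of_subset_of_card_le h (by rw [hR.card_equidistantSet hp, card_pair huw])).symm
  exact hR.bijOn_equidistantSet.injOn (by simpa using hp) (by simpa using hp')
    ((key hp h).trans (key hp' h').symm)

theorem card_filter_mem_equidistantSet (hR : G.RandomlyThreeDimensional) (z : V) :
    #{p ∈ (univ : Finset V).powersetCard 2 | z ∈ G.equidistantSet p} = Fintype.card V - 1 := by
  have hbij := hR.bijOn_equidistantSet
  calc #{p ∈ (univ : Finset V).powersetCard 2 | z ∈ G.equidistantSet p}
      = #{q ∈ (univ : Finset V).powersetCard 2 | {z} ⊆ q} := by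
        refine card_nbij G.equidistantSet (fun p hp => ?_)
          (hbij.injOn.mono (coe_subset.mpr (filter_subset _ _))) (fun q hq => ?_)
        · rw [mem_coe, mem_filter] at hp ⊢
          exact ⟨hbij.mapsTo hp.1, singleton_subset_iff.mpr hp.2⟩
        · rw [mem_coe, mem_filter] at hq
          obtain ⟨p, hp, rfl⟩ := hbij.surjOn hq.1
          exact ⟨p, mem_filter.mpr ⟨hp, singleton_subset_iff.mp hq.2⟩, rfl⟩
    _ = Fintype.card V - 1 := by
        rw [card_filter_powersetCard_subset _ _ _ (subset_univ _) (by simp)]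
        simp

theorem sum_choose_two_card_sphere (hR : G.RandomlyThreeDimensional) (hG : G.Connected) {z : V}
    {t : Finset ℕ} (ht0 : 0 ∉ t) (ht : ∀ x, x ≠ z → G.dist z x ∈ t) :
    ∑ j ∈ t, (#(G.sphere z j)).choose 2 = Fintype.card V - 1 := by
  have hmaps : ∀ x ∈ (univ : Finset V), G.dist z x ∈ insert 0 t := by
    intro x _
    by_cases hxz : x = z
    · simp [hxz]
    · exact mem_insert_of_mem (ht x hxz)
  have h := card_filter_powersetCard_two_eq_sum_choose (G.dist z) hmaps
  have h0 : #(G.sphere z 0) = 1 := by rw [hG.sphere_zero]; rfl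
  unfold sphere at h0 ⊢
  rw [sum_insert ht0, h0, Nat.choose_eq_zero_of_lt one_lt_two, zero_add] at h
  simp only [← hR.card_filter_mem_equidistantSet z, mem_equidistantSet]
  convert h.symm using 3

theorem exists_two_lt_card_sphere (hR : G.RandomlyThreeDimensional) (hG : G.Connected)
    [Nontrivial V] (z : V) : ∃ j, 2 < #(G.sphere z j) := by
  by_contra! h
  set t := (univ.erase z).image (G.dist z)
  have ht0 : 0 ∉ t := by
    simp only [t, mem_image, mem_erase, mem_univ, and_true, not_exists, not_and]
    exact fun x hxz h => hxz (hG.dist_eq_zero_iff.mp h).symm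
  have ht : ∀ x, x ≠ z → G.dist z x ∈ t := fun x hx =>
    mem_image_of_mem _ (mem_erase.mpr ⟨hx, mem_univ x⟩)
  have hlt : ∑ j ∈ t, (#(G.sphere z j)).choose 2 < ∑ j ∈ t, #(G.sphere z j) := by
    refine sum_lt_sum_of_nonempty ?_ fun j hj => ?_
    · obtain ⟨x, hx⟩ := exists_ne z
      exact ⟨_, ht x hx⟩
    · obtain ⟨x, -, rfl⟩ := mem_image.mp hj
      have : 0 < #(G.sphere z (G.dist z x)) := card_pos.mpr ⟨x, mem_sphere.mpr rfl⟩
      have := h (G.dist z x)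
      interval_cases #(G.sphere z (G.dist z x)) <;> decide
  rw [hR.sum_choose_two_card_sphere hG ht0 ht, hG.sum_card_sphere ht0 ht] at hlt
  exact lt_irrefl _ hlt

theorem neighborFinset_ne_singleton (hR : G.RandomlyThreeDimensional) (hG : G.Connected)
    [DecidableRel G.Adj] (z a : V) : G.neighborFinset z ≠ {a} := by
  intro hz
  have hadj : ∀ c, G.Adj z c ↔ c = a := fun c => by
    rw [← mem_neighborFinset, hz, mem_singleton]
  have hza : G.Adj z a := (hadj a).mpr rfl
  have hempty : G.equidistantSet {z, a} = ∅ := by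
    refine eq_empty_of_forall_notMem fun x hx => ?_
    rw [mem_equidistantSet_pair, dist_comm, dist_comm (u := x)] at hx
    by_cases hxz : x = z
    · rw [hxz, dist_self, dist_comm, dist_eq_one_iff_adj.mpr hza] at hx
      exact zero_ne_one hx
    · obtain ⟨c, hzc, hc⟩ := hG.exists_adj_dist_eq_add_one hxz
      rw [(hadj c).mp hzc] at hc
      omega
  simpa [hempty] using hR.card_equidistantSet (card_pair hza.ne)

theorem exists_equidistantSet_eq_of_neighborFinset_eq (hR : G.RandomlyThreeDimensional)
    (hG : G.Connected) [DecidableRel G.Adj] {z a b : V} (hab : a ≠ b)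
    (hz : G.neighborFinset z = {a, b}) :
    ∃ y, y ≠ z ∧ G.Adj y a ∧ G.Adj y b ∧ G.equidistantSet {z, y} = {a, b} := by
  have hadj : ∀ c, G.Adj z c ↔ c ∈ ({a, b} : Finset V) := fun c => by
    rw [← hz, mem_neighborFinset]
  obtain ⟨p, hp, hpab⟩ := hR.exists_equidistantSet_eq (card_pair hab)
  obtain ⟨x, y, hxy, rfl⟩ := card_eq_two.mp hp
  have hzxy : z = x ∨ z = y := by
    by_contra! h
    have hz : z ∈ G.equidistantSet {x, y} := mem_equidistantSet_pair.mpr <|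
      hG.dist_eq_of_forall_adj_dist_eq
        (fun c hc => mem_equidistantSet_pair.mp (hpab ▸ (hadj c).mp hc)) h.1.symm h.2.symm
    exact G.irrefl ((hadj z).mpr (hpab ▸ hz))
  obtain ⟨y, hyz, hzy⟩ : ∃ y, y ≠ z ∧ G.equidistantSet {z, y} = {a, b} := by
    rcases hzxy with rfl | rfl
    · exact ⟨y, hxy.symm, hpab⟩
    · exact ⟨x, hxy, pair_comm z x ▸ hpab⟩
  have hyadj : ∀ c ∈ ({a, b} : Finset V), G.Adj y c := fun c hc => by
    have h := mem_equidistantSet_pair.mp (hzy ▸ hc : c ∈ G.equidistantSet {z, y})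
    rw [dist_comm, dist_eq_one_iff_adj.mpr ((hadj c).mpr hc), dist_comm] at h
    exact dist_eq_one_iff_adj.mp h.symm
  exact ⟨y, hyz, hyadj a (mem_insert_self a {b}),
    hyadj b (mem_insert_of_mem (mem_singleton_self b)), hzy⟩

theorem card_sphere_le_two_of_neighborFinset_eq (hR : G.RandomlyThreeDimensional)
    (hG : G.Connected) [DecidableRel G.Adj] {z a b y : V} (hab : a ≠ b)
    (hz : G.neighborFinset z = {a, b}) (hyz : y ≠ z) (hya : G.Adj y a) (hyb : G.Adj y b)
    (hzy : G.equidistantSet {z, y} = {a, b}) {j : ℕ} (hj : 2 ≤ j) : #(G.sphere z j) ≤ 2 := by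
  have hadj : ∀ c, G.Adj z c ↔ c ∈ ({a, b} : Finset V) := fun c => by
    rw [← hz, mem_neighborFinset]
  have hza : G.Adj z a := (hadj a).mpr (mem_insert_self a {b})
  have hzb : G.Adj z b := (hadj b).mpr (mem_insert_of_mem (mem_singleton_self b))
  have hnotab : ∀ x ∈ G.sphere z j, x ∉ ({a, b} : Finset V) := fun x hx hxab => by
    rw [mem_sphere, dist_eq_one_iff_adj.mpr ((hadj x).mpr hxab)] at hx
    omega
  have hmaps : ∀ x ∈ G.sphere z j, G.dist y x ∈ Icc (j - 2) (j - 1) := by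
    intro x hx
    have hxz : x ≠ z := by rintro rfl; simp at hx; omega
    have hle : G.dist y x ≤ G.dist z x := hG.dist_le_dist_of_neighborSet_subset
      (fun c hc => by rcases mem_insert.mp ((hadj c).mp hc) with rfl | hcb
                      · exact hya
                      · exact mem_singleton.mp hcb ▸ hyb) hxz
    have hne : G.dist y x ≠ G.dist z x := fun h => hnotab x hx <| hzy ▸
      mem_equidistantSet_pair.mpr (by rw [dist_comm, ← h, dist_comm])
    have htri : G.dist z x ≤ G.dist z y + G.dist y x := hG.dist_triangle
    have hzy2 : G.dist z y ≤ G.dist a y + 1 := hG.dist_le_dist_add_one_of_adj hza y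
    rw [dist_eq_one_iff_adj.mpr hya.symm] at hzy2
    rw [mem_sphere] at hx
    rw [mem_Icc]
    omega
  have hinj : Set.InjOn (G.dist y) (G.sphere z j) := by
    intro x₁ hx₁ x₂ hx₂ heq
    by_contra hne
    have hsub : {z, y} ⊆ G.equidistantSet {x₁, x₂} := by
      simp only [insert_subset_iff, singleton_subset_iff, mem_equidistantSet_pair]
      exact ⟨(mem_sphere.mp hx₁).trans (mem_sphere.mp hx₂).symm, heq⟩
    have hsub' : {z, y} ⊆ G.equidistantSet {a, b} := by
      simp only [insert_subset_iff, singleton_subset_iff]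
      exact ⟨mem_equidistantSet_pair_of_adj hza hzb, mem_equidistantSet_pair_of_adj hya hyb⟩
    have := hR.eq_of_pair_subset_equidistantSet (card_pair hne) (card_pair hab) hyz.symm hsub hsub'
    exact hnotab x₁ hx₁ (this ▸ mem_insert_self x₁ {x₂})
  calc #(G.sphere z j) ≤ #(Icc (j - 2) (j - 1)) := card_le_card_of_injOn _ hmaps hinj
    _ = 2 := by simp; omega

theorem neighborFinset_ne_pair (hR : G.RandomlyThreeDimensional) (hG : G.Connected)
    [DecidableRel G.Adj] [Nontrivial V] {z a b : V} (hab : a ≠ b) :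
    G.neighborFinset z ≠ {a, b} := by
  intro hz
  obtain ⟨y, hyz, hya, hyb, hzy⟩ := hR.exists_equidistantSet_eq_of_neighborFinset_eq hG hab hz
  obtain ⟨j, hj⟩ := hR.exists_two_lt_card_sphere hG z
  rcases j with _ | _ | j
  · simp [hG.sphere_zero] at hj
  · rw [sphere_one, hz, card_pair hab] at hj
    exact lt_irrefl _ hj
  · exact (hR.card_sphere_le_two_of_neighborFinset_eq hG hab hz hyz hya hyb hzy
      (Nat.le_add_left 2 j)).not_gt hj

theorem three_le_degree (hR : G.RandomlyThreeDimensional) (hG : G.Connected) [DecidableRel G.Adj]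
    [Nontrivial V] (z : V) : 3 ≤ G.degree z := by
  obtain ⟨x, hxz⟩ := exists_ne z
  obtain ⟨c, hzc, -⟩ := hG.exists_adj_dist_eq_add_one hxz
  have hpos : 0 < #(G.neighborFinset z) := card_pos.mpr ⟨c, (mem_neighborFinset _ _ _).mpr hzc⟩
  by_contra! h
  rw [← card_neighborFinset_eq_degree] at h
  interval_cases hN : #(G.neighborFinset z)
  · obtain ⟨a, ha⟩ := card_eq_one.mp hN
    exact hR.neighborFinset_ne_singleton hG z a ha
  · obtain ⟨a, b, hab, hN⟩ := card_eq_two.mp hN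
    exact hR.neighborFinset_ne_pair hG hab hN

theorem dist_le_two (hR : G.RandomlyThreeDimensional) (hG : G.Connected) [DecidableRel G.Adj]
    (hdeg : ∀ z, 3 ≤ G.degree z) (u v : V) : G.dist u v ≤ 2 := by
  obtain ⟨⟨x, z⟩, -, hmax⟩ :=
    exists_max_image univ (fun q : V × V => G.dist q.1 q.2) ⟨(u, v), mem_univ _⟩
  have hmax : ∀ u v, G.dist u v ≤ G.dist x z := fun u v => hmax (u, v) (mem_univ _)
  refine (hmax u v).trans (not_lt.mp fun hD => ?_)
  have hxz : x ≠ z := by rintro rfl; simp at hD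
  obtain ⟨c₁, c₂, hc, hxc₁, hxc₂, hcz⟩ :=
    hG.exists_adj_ne_dist_eq_of_forall_dist_le hmax (hdeg x)
  obtain ⟨e₁, e₂, he, hze₁, hze₂, hex⟩ :=
    hG.exists_adj_ne_dist_eq_of_forall_dist_le (fun u v => (hmax u v).trans_eq dist_comm) (hdeg z)
  have hc₁₂ : {x, z} ⊆ G.equidistantSet {c₁, c₂} := by
    simp only [insert_subset_iff, singleton_subset_iff]
    refine ⟨mem_equidistantSet_pair_of_adj hxc₁ hxc₂, mem_equidistantSet_pair.mpr ?_⟩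
    rw [dist_comm, hcz, dist_comm]
  have he₁₂ : {x, z} ⊆ G.equidistantSet {e₁, e₂} := by
    simp only [insert_subset_iff, singleton_subset_iff]
    refine ⟨mem_equidistantSet_pair.mpr ?_, mem_equidistantSet_pair_of_adj hze₁ hze₂⟩
    rw [dist_comm, hex, dist_comm]
  have hpair := hR.eq_of_pair_subset_equidistantSet (card_pair hc) (card_pair he) hxz hc₁₂ he₁₂
  have hzc₁ : G.Adj z c₁ := by
    rcases mem_insert.mp (hpair ▸ mem_insert_self c₁ {c₂}) with rfl | h
    · exact hze₁
    · exact mem_singleton.mp h ▸ hze₂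
  have := hG.dist_le_dist_add_one_of_adj hxc₁ z
  rw [dist_comm (u := c₁), dist_eq_one_iff_adj.mpr hzc₁] at this
  omega

theorem degree_eq_three (hR : G.RandomlyThreeDimensional) (hG : G.Connected) [DecidableRel G.Adj]
    [Nontrivial V] (z : V) :
    G.degree z = 3 ∧ (Fintype.card V = 4 ∧ G.sphere z 2 = ∅ ∨ Fintype.card V = 7) := by
  have hdeg := hR.three_le_degree hG
  have ht0 : 0 ∉ ({1, 2} : Finset ℕ) := by decide
  have ht : ∀ x, x ≠ z → G.dist z x ∈ ({1, 2} : Finset ℕ) := fun x hx => by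
    have := hG.pos_dist_of_ne hx.symm
    have := hR.dist_le_two hG hdeg z x
    simp only [mem_insert, mem_singleton]
    omega
  have hsum := hG.sum_card_sphere ht0 ht
  have hchoose := hR.sum_choose_two_card_sphere hG ht0 ht
  rw [sum_pair (by decide : (1 : ℕ) ≠ 2), sphere_one, card_neighborFinset_eq_degree]
    at hsum hchoose
  obtain ⟨h3, h2⟩ := Nat.eq_three_of_choose_two_add_choose_two (hdeg z) (hchoose.trans hsum.symm)
  exact ⟨h3, h2.imp (fun h => ⟨by omega, card_eq_zero.mp h⟩) (fun h => by omega)⟩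

theorem card_eq_four (hR : G.RandomlyThreeDimensional) (hG : G.Connected) [Nontrivial V] :
    Fintype.card V = 4 := by
  classical
  obtain ⟨z⟩ := (inferInstance : Nonempty V)
  refine ((hR.degree_eq_three hG z).2.resolve_right fun h7 => ?_).1
  have hsum := G.sum_degrees_eq_twice_card_edges
  rw [sum_congr rfl fun v _ => (hR.degree_eq_three hG v).1, sum_const, card_univ, h7,
    smul_eq_mul] at hsum
  omega

theorem eq_top (hR : G.RandomlyThreeDimensional) (hG : G.Connected) [Nontrivial V] : G = ⊤ := by
  classical
  ext u v
  refine ⟨G.ne_of_adj, fun huv => ?_⟩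
  have hsphere := ((hR.degree_eq_three hG u).2.resolve_right
    (by rw [hR.card_eq_four hG]; decide)).2
  have hv : G.dist u v ≠ 2 := fun h => by simpa [hsphere] using mem_sphere.mpr h
  have := hG.pos_dist_of_ne huv
  have := hR.dist_le_two hG (hR.three_le_degree hG) u v
  exact dist_eq_one_iff_adj.mp (by omega)

end RandomlyThreeDimensional

end SimpleGraph

/-- a randomly 3-dimensional graph is isomorphic to the complete graph `K₄`. -/
theorem stmt5 {V : Type*} [Fintype V] [DecidableEq V] (G : SimpleGraph V)
    (hconn : G.Connected) (hdim : metricDim G = 3) (hres : resolvingNumber G = 3) :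
    Nonempty (G ≃g (⊤ : SimpleGraph (Fin 4))) := by
  have hR := SimpleGraph.RandomlyThreeDimensional.of_metricDim_eq_three hdim hres
  have : Nontrivial V := nontrivial_of_metricDim_ne_zero (G := G) (by omega)
  rw [hR.eq_top hconn]
  exact ⟨SimpleGraph.Iso.completeGraph (Fintype.equivFinOfCardEq (hR.card_eq_four hconn))⟩
end

section
/- Let G be a finite simple connected graph of order n with dim(G) = res(G) = k where k ≥ 4. Then n = k + 1 and G is isomorphic to the complete graph K_{k+1}. -/
open Finset

private lemma chooseMonoHalf {n : ℕ} : ∀ b a : ℕ, a ≤ b → b ≤ n / 2 →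
    Nat.choose n a ≤ Nat.choose n b := by
  intro b
  induction b with
  | zero => intro a ha _; interval_cases a; rfl
  | succ m ih =>
    intro a ha hb
    rcases Nat.lt_or_ge a (m + 1) with h | h
    · exact le_trans (ih a (Nat.lt_succ_iff.mp h) (by omega))
        (Nat.choose_le_succ_of_lt_half_left (by omega))
    · have : a = m + 1 := le_antisymm ha h
      rw [this]

private lemma binomLemma {n k : ℕ} (hk : 4 ≤ k) (hn : k + 2 ≤ n) :
    Nat.choose n 2 < Nat.choose n (k - 1) := by
  have h6 : 6 ≤ n := by omega
  have h23 : Nat.choose n 2 < Nat.choose n 3 := by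
    have h := Nat.choose_succ_right_eq n 2
    have hpos : 0 < Nat.choose n 2 := Nat.choose_pos (by omega)
    have h4 : 4 ≤ n - 2 := by omega
    have : Nat.choose n 2 * 3 < Nat.choose n 3 * 3 := by
      calc Nat.choose n 2 * 3 < Nat.choose n 2 * 4 := by omega
        _ ≤ Nat.choose n 2 * (n - 2) := Nat.mul_le_mul_left _ h4
        _ = Nat.choose n 3 * 3 := h.symm
    omega
  have h3k : Nat.choose n 3 ≤ Nat.choose n (k - 1) := by
    rcases le_or_gt (k - 1) (n / 2) with h | h
    · exact chooseMonoHalf (k - 1) 3 (by omega) h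
    · have hsymm : Nat.choose n (n - (k - 1)) = Nat.choose n (k - 1) :=
        Nat.choose_symm (by omega)
      rw [← hsymm]
      exact chooseMonoHalf (n - (k - 1)) 3 (by omega) (by omega)
  omega

private lemma pairCases {V : Type*} [DecidableEq V] {x y z w : V}
    (h : ({x, y} : Finset V) = {z, w}) : (x = z ∧ y = w) ∨ (x = w ∧ y = z) := by
  have h' : ({x, y} : Set V) = {z, w} := by
    have := congrArg (fun s : Finset V => (s : Set V)) h
    simpa using this
  exact Set.pair_eq_pair_iff.mp h'

/-- if `G` is a finite simple connected graph of order `n` with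
`dim(G) = res(G) = k` and `k ≥ 4`, then `n = k + 1` and `G ≅ K_{k+1}`. -/
theorem stmt7 {V : Type*} [Fintype V] [DecidableEq V] (G : SimpleGraph V)
    (hconn : G.Connected) (n k : ℕ) (hn : Fintype.card V = n) (hk : 4 ≤ k)
    (hdim : metricDim G = k) (hres : resolvingNumber G = k) :
    n = k + 1 ∧ Nonempty (G ≃g (⊤ : SimpleGraph (Fin (k + 1)))) := by
  classical
  have hdistne : ∀ x y : V, x ≠ y → G.dist x y ≠ 0 := fun x y hxy =>
    Nat.pos_iff_ne_zero.mp (hconn.pos_dist_of_ne hxy)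
  -- univ is resolving
  have huniv : IsResolvingSet G ((univ : Finset V) : Set V) := by
    intro x y hxy
    refine ⟨x, by simp, ?_⟩
    rw [SimpleGraph.dist_self]
    exact (hdistne x y hxy).symm
  have hdim' : sInf {j | ∃ S : Finset V, S.card = j ∧ IsResolvingSet G ↑S} = k := hdim
  have hres' : sInf {j | ∀ S : Finset V, S.card = j → IsResolvingSet G ↑S} = k := hres
  have hMne : {j | ∃ S : Finset V, S.card = j ∧ IsResolvingSet G ↑S}.Nonempty :=
    ⟨(univ : Finset V).card, univ, rfl, huniv⟩
  have hkM : k ∈ {j | ∃ S : Finset V, S.card = j ∧ IsResolvingSet G ↑S} :=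
    hdim' ▸ Nat.sInf_mem hMne
  obtain ⟨S₀, hS₀card, _⟩ := hkM
  have hkn : k ≤ n := by rw [← hS₀card, ← hn]; exact Finset.card_le_univ S₀
  -- no set of size < k resolves
  have hnores : ∀ T : Finset V, T.card < k → ¬ IsResolvingSet G ↑T := by
    intro T hT hresT
    have : sInf {j | ∃ S : Finset V, S.card = j ∧ IsResolvingSet G ↑S} ≤ T.card :=
      Nat.sInf_le ⟨T, rfl, hresT⟩
    omega
  -- every k-set resolves
  have hRne : {j | ∀ S : Finset V, S.card = j → IsResolvingSet G ↑S}.Nonempty := by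
    refine ⟨n + 1, fun S hS => ?_⟩
    exfalso
    have := Finset.card_le_univ S
    omega
  have hkR : ∀ S : Finset V, S.card = k → IsResolvingSet G ↑S :=
    hres' ▸ Nat.sInf_mem hRne
  -- n ≥ k + 1
  have hVne : Nonempty V := by
    rw [← Fintype.card_pos_iff]; omega
  obtain ⟨v⟩ := hVne
  have herase : IsResolvingSet G ((univ.erase v : Finset V) : Set V) := by
    intro x y hxy
    by_cases hx : x = v
    · refine ⟨y, ?_, ?_⟩
      · simp only [Finset.mem_coe, Finset.mem_erase, Finset.mem_univ, and_true]
        exact fun h => hxy (hx.trans h.symm)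
      · rw [SimpleGraph.dist_self]
        exact hdistne y x (Ne.symm hxy)
    · refine ⟨x, by simp [Finset.mem_erase, hx], ?_⟩
      rw [SimpleGraph.dist_self]
      exact (hdistne x y hxy).symm
  have hkn1 : k + 1 ≤ n := by
    have hcard : (univ.erase v).card = n - 1 := by
      rw [Finset.card_erase_of_mem (Finset.mem_univ v), Finset.card_univ, hn]
    by_contra h
    exact hnores (univ.erase v) (by omega) herase
  -- non-resolver sets
  set Nf : V → V → Finset V := fun x y => univ.filter (fun z => G.dist z x = G.dist z y)
    with hNf
  have hNfmem : ∀ x y z : V, z ∈ Nf x y ↔ G.dist z x = G.dist z y := by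
    intro x y z; simp [hNf]
  have hNsymm : ∀ x y : V, Nf x y = Nf y x := by
    intro x y; ext z; simp only [hNfmem]; exact eq_comm
  have hNcard : ∀ x y : V, x ≠ y → (Nf x y).card ≤ k - 1 := by
    intro x y hxy
    by_contra h
    obtain ⟨W, hW, hWcard⟩ := Finset.exists_subset_card_eq (show k ≤ (Nf x y).card by omega)
    obtain ⟨u, hu, hune⟩ := hkR W hWcard x y hxy
    exact hune ((hNfmem x y u).mp (hW (Finset.mem_coe.mp hu)))
  -- every (k-1)-set is the non-resolver set of some pair
  have hTN : ∀ T : Finset V, T.card = k - 1 → ∃ x y : V, x ≠ y ∧ T = Nf x y := by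
    intro T hT
    have hnr := hnores T (by omega)
    simp only [IsResolvingSet, not_forall] at hnr
    obtain ⟨x, y, hxy, hall⟩ := hnr
    push_neg at hall
    refine ⟨x, y, hxy, ?_⟩
    have hsub : T ⊆ Nf x y := by
      intro z hz
      exact (hNfmem x y z).mpr (hall z (Finset.mem_coe.mpr hz))
    exact Finset.eq_of_subset_of_card_le hsub (by have := hNcard x y hxy; omega)
  -- the injection
  set f : Finset V → Finset V := fun T =>
    if h : ∃ p : V × V, p.1 ≠ p.2 ∧ T = Nf p.1 p.2 then {h.choose.1, h.choose.2} else ∅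
    with hf
  have hfP : ∀ T : Finset V, T.card = k - 1 →
      ∃ x y : V, x ≠ y ∧ T = Nf x y ∧ f T = {x, y} := by
    intro T hT
    obtain ⟨x, y, hxy, hTxy⟩ := hTN T hT
    have hex : ∃ p : V × V, p.1 ≠ p.2 ∧ T = Nf p.1 p.2 := ⟨(x, y), hxy, hTxy⟩
    refine ⟨hex.choose.1, hex.choose.2, hex.choose_spec.1, hex.choose_spec.2, ?_⟩
    simp only [hf, dif_pos hex]
  set A : Finset (Finset V) := univ.powersetCard (k - 1) with hA
  set B : Finset (Finset V) := univ.powersetCard 2 with hB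
  have hAmem : ∀ T : Finset V, T ∈ A ↔ T.card = k - 1 := by
    intro T; simp [hA, Finset.mem_powersetCard]
  have hBmem : ∀ T : Finset V, T ∈ B ↔ T.card = 2 := by
    intro T; simp [hB, Finset.mem_powersetCard]
  have hmaps : ∀ T ∈ A, f T ∈ B := by
    intro T hT
    obtain ⟨x, y, hxy, _, hfT⟩ := hfP T ((hAmem T).mp hT)
    rw [hfT]
    exact (hBmem _).mpr (Finset.card_pair hxy)
  have hinj : ((A : Set (Finset V))).InjOn f := by
    intro T hT T' hT' hfeq
    obtain ⟨x, y, hxy, hTxy, hfT⟩ := hfP T ((hAmem T).mp (Finset.mem_coe.mp hT))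
    obtain ⟨x', y', hxy', hTxy', hfT'⟩ := hfP T' ((hAmem T').mp (Finset.mem_coe.mp hT'))
    have hpair : ({x, y} : Finset V) = {x', y'} := by rw [← hfT, ← hfT', hfeq]
    rcases pairCases hpair with ⟨h1, h2⟩ | ⟨h1, h2⟩
    · rw [hTxy, hTxy', h1, h2]
    · rw [hTxy, hTxy', h1, h2, hNsymm]
  have hcardle : A.card ≤ B.card := Finset.card_le_card_of_injOn f hmaps hinj
  have hAcard : A.card = Nat.choose n (k - 1) := by
    rw [hA, Finset.card_powersetCard, Finset.card_univ, hn]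
  have hBcard : B.card = Nat.choose n 2 := by
    rw [hB, Finset.card_powersetCard, Finset.card_univ, hn]
  have hchoose : Nat.choose n (k - 1) ≤ Nat.choose n 2 := by
    rw [← hAcard, ← hBcard]; exact hcardle
  -- n = k + 1
  have hneq : n = k + 1 := by
    by_contra h
    have : k + 2 ≤ n := by omega
    have := binomLemma hk this
    omega
  -- equality: image of A under f is all of B
  have hAeqB : A.card = B.card := by
    rw [hAcard, hBcard]
    have : k - 1 = n - 2 := by omega
    rw [this, Nat.choose_symm (by omega)]
  have himg : A.image f = B := by
    apply Finset.eq_of_subset_of_card_le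
    · intro b hb
      obtain ⟨T, hT, hfT⟩ := Finset.mem_image.mp hb
      exact hfT ▸ hmaps T hT
    · rw [Finset.card_image_of_injOn hinj, hAeqB]
  -- every pair is resolved only by its endpoints
  have key : ∀ x y : V, x ≠ y → ∀ z : V, z ≠ x → z ≠ y → G.dist z x = G.dist z y := by
    intro x y hxy z hzx hzy
    have hxyB : ({x, y} : Finset V) ∈ B := (hBmem _).mpr (Finset.card_pair hxy)
    rw [← himg] at hxyB
    obtain ⟨T, hTA, hfT⟩ := Finset.mem_image.mp hxyB
    obtain ⟨a, b, hab, hTab, hfab⟩ := hfP T ((hAmem T).mp hTA)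
    have hpair : ({a, b} : Finset V) = {x, y} := by rw [← hfab, hfT]
    have hNT : Nf x y = T := by
      rcases pairCases hpair with ⟨h1, h2⟩ | ⟨h1, h2⟩
      · rw [← h1, ← h2, hTab]
      · rw [← h1, ← h2, hNsymm, hTab]
    have hTcard : T.card = k - 1 := (hAmem T).mp hTA
    -- Nf x y ⊆ (univ.erase x).erase y, both of card n - 2
    have hxnot : x ∉ Nf x y := by
      rw [hNfmem, SimpleGraph.dist_self]
      exact Ne.symm (hdistne x y hxy)
    have hynot : y ∉ Nf x y := by
      rw [hNfmem, SimpleGraph.dist_self]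
      exact hdistne y x (Ne.symm hxy)
    have hsub : Nf x y ⊆ (univ.erase x).erase y := by
      intro w hw
      rw [Finset.mem_erase, Finset.mem_erase]
      refine ⟨fun h => hynot (h ▸ hw), fun h => hxnot (h ▸ hw), Finset.mem_univ w⟩
    have hecard : ((univ.erase x).erase y).card = n - 2 := by
      rw [Finset.card_erase_of_mem, Finset.card_erase_of_mem (Finset.mem_univ x),
        Finset.card_univ, hn]
      · omega
      · exact Finset.mem_erase.mpr ⟨Ne.symm hxy, Finset.mem_univ y⟩
    have heq : Nf x y = (univ.erase x).erase y := by
      apply Finset.eq_of_subset_of_card_le hsub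
      rw [hecard, hNT, hTcard]
      omega
    have hzmem : z ∈ Nf x y := by
      rw [heq, Finset.mem_erase, Finset.mem_erase]
      exact ⟨hzy, hzx, Finset.mem_univ z⟩
    exact (hNfmem x y z).mp hzmem
  -- completeness
  have hadj : ∀ x y : V, x ≠ y → G.Adj x y := by
    intro x y hxy
    by_contra hna
    have hd : G.dist x y ≠ 0 := hdistne x y hxy
    obtain ⟨p, hp⟩ := SimpleGraph.exists_walk_of_dist_ne_zero hd
    have hnil : ¬ p.Nil := by
      rw [SimpleGraph.Walk.nil_iff_length_eq]
      omega
    set z := p.getVert 1 with hz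
    have hadjxz : G.Adj x z := SimpleGraph.Walk.adj_snd hnil
    have hzx : z ≠ x := hadjxz.ne'
    have hzy : z ≠ y := fun h => hna (h ▸ hadjxz)
    have h1 : G.dist z x = G.dist z y := key x y hxy z hzx hzy
    have h2 : G.dist z x = 1 := by
      rw [SimpleGraph.dist_comm]
      exact SimpleGraph.dist_eq_one_iff_adj.mpr hadjxz
    have hadjzy : G.Adj z y := SimpleGraph.dist_eq_one_iff_adj.mp (h1 ▸ h2)
    have h3 : G.dist y x = G.dist y z := key x z hadjxz.ne y (Ne.symm hxy) (Ne.symm hzy)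
    have h4 : G.dist y z = 1 := by
      rw [SimpleGraph.dist_comm]
      exact SimpleGraph.dist_eq_one_iff_adj.mpr hadjzy
    have h5 : G.dist x y = 1 := by rw [SimpleGraph.dist_comm, h3, h4]
    exact hna (SimpleGraph.dist_eq_one_iff_adj.mp h5)
  refine ⟨hneq, ?_⟩
  have hcard : Fintype.card V = k + 1 := by rw [hn, hneq]
  let e : V ≃ Fin (k + 1) := Fintype.equivFinOfCardEq hcard
  refine ⟨⟨e, ?_⟩⟩
  intro a b
  simp only [SimpleGraph.top_adj, ne_eq, EmbeddingLike.apply_eq_iff_eq]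
  constructor
  · intro h; exact hadj a b h
  · intro h; exact h.ne
end

section
/- Let ℓ ≥ 2 and let {x,y} be a diagonal pair of the grid graph G_ℓ with d(x,y) = 2 (so, writing x = (x1,x2) and y = (y1,y2) with x1 < y1, we have y1 = x1 + 1 and y2 = x2 − 1). Then R(x,y) = Q2(x) ∪ Q4(y). -/
/-!
The grid graph is the box product of two path graphs, so its distance is the taxicab distance.
For the pair `x`, `y = x + (1, -1)`, each coordinate of `u` contributes `±1` to
`d(u, x) - d(u, y)`: the first coordinate `-1` iff `u.1 ≤ x.1`, the second `-1` iff `x.2 ≤ u.2`.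
The two contributions cancel unless they have the same sign, i.e. unless `u ∈ Q2(x) ∪ Q4(y)`.
-/

/-- The `a × b` grid graph on `Fin a × Fin b`: two vertices are adjacent iff they
differ by exactly 1 in one coordinate and agree in the other (i.e. their taxicab
distance is 1). -/
def gridGraph (a b : ℕ) : SimpleGraph (Fin a × Fin b) where
  Adj x y := ((x.1 : ℕ) - y.1) + ((y.1 : ℕ) - x.1) + ((x.2 : ℕ) - y.2) + ((y.2 : ℕ) - x.2) = 1
  symm := ⟨by intro x y h; omega⟩
  loopless := ⟨by intro x h; omega⟩

namespace SimpleGraph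

variable {V : Type*} {G : SimpleGraph V}

theorem le_add_length_of_adj_le (φ : V → ℕ) (h_adj : ∀ u v, G.Adj u v → φ u ≤ φ v + 1)
    {u v : V} (p : G.Walk u v) : φ u ≤ φ v + p.length := by
  induction p with
  | nil => simp
  | cons h _ ih =>
    rw [Walk.length_cons]
    have := h_adj _ _ h
    omega

theorem exists_walk_length_eq_of_descent {y : V} (φ : V → ℕ) (h_zero : ∀ u, φ u = 0 → u = y)
    (h_step : ∀ u, φ u ≠ 0 → ∃ v, G.Adj u v ∧ φ v + 1 = φ u) (u : V) :
    ∃ p : G.Walk u y, p.length = φ u := by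
  induction hn : φ u generalizing u with
  | zero =>
    obtain rfl := h_zero u hn
    exact ⟨Walk.nil, rfl⟩
  | succ n ih =>
    obtain ⟨v, huv, hv⟩ := h_step u (by omega)
    obtain ⟨p, hp⟩ := ih v (by omega)
    exact ⟨Walk.cons huv p, by rw [Walk.length_cons, hp]⟩

theorem edist_eq_of_potential {y : V} (φ : V → ℕ) (h_zero : ∀ u, φ u = 0 ↔ u = y)
    (h_adj : ∀ u v, G.Adj u v → φ u ≤ φ v + 1)
    (h_step : ∀ u, φ u ≠ 0 → ∃ v, G.Adj u v ∧ φ v + 1 = φ u) (u : V) :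
    G.edist u y = φ u := by
  obtain ⟨p, hp⟩ := exists_walk_length_eq_of_descent φ (fun u ↦ (h_zero u).1) h_step u
  obtain ⟨q, hq⟩ := p.reachable.exists_walk_length_eq_edist
  refine le_antisymm (hp ▸ edist_le p) ?_
  have := le_add_length_of_adj_le φ h_adj q
  rw [(h_zero y).2 rfl, zero_add] at this
  exact hq ▸ Nat.cast_le.2 this

theorem pathGraph_edist {n : ℕ} (i j : Fin n) : (pathGraph n).edist i j = Nat.dist i j := by
  refine edist_eq_of_potential (fun k : Fin n ↦ Nat.dist k j) (fun k ↦ ?_) (fun k l hkl ↦ ?_)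
    (fun k hk ↦ ?_) i
  · simp only [Nat.dist, Fin.ext_iff]
    omega
  · rw [pathGraph_adj] at hkl
    simp only [Nat.dist]
    omega
  · simp only [Nat.dist] at hk ⊢
    rcases Nat.lt_or_gt_of_ne (fun h : (k : ℕ) = j ↦ hk (by omega)) with hlt | hgt
    · exact ⟨⟨k + 1, by omega⟩, pathGraph_adj.2 (.inl rfl), by simp only; omega⟩
    · exact ⟨⟨k - 1, by omega⟩, pathGraph_adj.2 (.inr (by simp only; omega)), by simp only; omega⟩

end SimpleGraph

open SimpleGraph

theorem gridGraph_eq_boxProd (a b : ℕ) : gridGraph a b = pathGraph a □ pathGraph b := by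
  ext x y
  simp only [gridGraph, boxProd_adj, pathGraph_adj, Fin.ext_iff]
  omega

theorem gridGraph_dist {a b : ℕ} (x y : Fin a × Fin b) :
    (gridGraph a b).dist x y = Nat.dist x.1 y.1 + Nat.dist x.2 y.2 := by
  rw [SimpleGraph.dist, gridGraph_eq_boxProd, edist_boxProd, pathGraph_edist, pathGraph_edist]
  rfl

theorem stmt9_general (ℓ : ℕ) (x y : Fin ℓ × Fin ℓ)
    (hdiag : (x.1 : ℕ) + (x.2 : ℕ) = (y.1 : ℕ) + (y.2 : ℕ)) (hlt : (x.1 : ℕ) < (y.1 : ℕ))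
    (hdist : (gridGraph ℓ ℓ).dist x y = 2) :
    {u : Fin ℓ × Fin ℓ | (gridGraph ℓ ℓ).dist u x ≠ (gridGraph ℓ ℓ).dist u y} =
      {u : Fin ℓ × Fin ℓ | (u.1 : ℕ) ≤ (x.1 : ℕ) ∧ (x.2 : ℕ) ≤ (u.2 : ℕ)} ∪
      {u : Fin ℓ × Fin ℓ | (y.1 : ℕ) ≤ (u.1 : ℕ) ∧ (u.2 : ℕ) ≤ (y.2 : ℕ)} := by
  rw [gridGraph_dist] at hdist
  have hy : (y.1 : ℕ) = x.1 + 1 ∧ (x.2 : ℕ) = y.2 + 1 := by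
    simp only [Nat.dist] at hdist
    omega
  ext u
  simp only [Set.mem_ofPred_eq, Set.mem_union, gridGraph_dist, Nat.dist]
  omega

theorem stmt9 (ℓ : ℕ) (hℓ : 2 ≤ ℓ) (x y : Fin ℓ × Fin ℓ)
    (hdiag : (x.1 : ℕ) + (x.2 : ℕ) = (y.1 : ℕ) + (y.2 : ℕ)) (hlt : (x.1 : ℕ) < (y.1 : ℕ))
    (hdist : (gridGraph ℓ ℓ).dist x y = 2) :
    {u : Fin ℓ × Fin ℓ | (gridGraph ℓ ℓ).dist u x ≠ (gridGraph ℓ ℓ).dist u y} =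
      {u : Fin ℓ × Fin ℓ | (u.1 : ℕ) ≤ (x.1 : ℕ) ∧ (x.2 : ℕ) ≤ (u.2 : ℕ)} ∪
      {u : Fin ℓ × Fin ℓ | (y.1 : ℕ) ≤ (u.1 : ℕ) ∧ (u.2 : ℕ) ≤ (y.2 : ℕ)} :=
  stmt9_general ℓ x y hdiag hlt hdist
end

section
/- Let ℓ ≥ 2 and let {x,y} be a diagonal pair of the grid graph G_ℓ with d(x,y) > 2, where x = (x1,x2), y = (y1,y2), x1 < y1. Set z = (x1,y2) and z̃ = (y1,x2). Then R(x,y) = V(G_ℓ) \ ( Q3(z) ∪ Q1(z̃) ∪ { (x1+j, y2+j) : 0 < j < y1−x1 } ). -/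
/-!
Distances in the grid are taxicab distances, so whether `u = (p, q)` resolves `x = (a, d)` and
`y = (b, c)` (with `a < b` and `a + d = b + c`, hence `c < d`) is a piecewise linear condition on
`p` and `q`. Below-left of `(a, c)` and above-right of `(b, d)` both distances change by the same
amount as `u` moves, so they stay equal; inside the box `[a, b] × [c, d]` they agree exactly on
the diagonal `p - q = a - c`; elsewhere they differ.
-/

lemma Fin.exists_dist_eq_one_and_dist_succ {n : ℕ} {i j : Fin n} (hij : i ≠ j) :
    ∃ k : Fin n, Nat.dist i k = 1 ∧ Nat.dist k j + 1 = Nat.dist i j := by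
  have hj := j.isLt
  rcases Nat.lt_or_gt_of_ne (Fin.val_ne_of_ne hij) with h | h
  · exact ⟨⟨i + 1, by omega⟩, by simp only [Nat.dist]; omega⟩
  · exact ⟨⟨i - 1, by omega⟩, by simp only [Nat.dist]; omega⟩

lemma Nat.dist_add_dist_eq_dist_add_dist_iff {a b c d p q : ℕ} (hab : a < b)
    (hdiag : a + d = b + c) :
    p.dist a + q.dist d = p.dist b + q.dist c ↔
      ((p ≤ a ∧ q ≤ c) ∨ (b ≤ p ∧ d ≤ q)) ∨
        ∃ j, 0 < j ∧ j < b - a ∧ p = a + j ∧ q = c + j := by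
  simp only [Nat.dist]
  constructor
  · intro h
    by_contra! hne
    have := hne.2 (p - a)
    omega
  · rintro ((h | h) | ⟨j, -, -, rfl, rfl⟩) <;> omega

namespace gridGraph

variable {a b : ℕ}

def taxicabDist (u v : Fin a × Fin b) : ℕ := Nat.dist u.1 v.1 + Nat.dist u.2 v.2

lemma adj_iff {u v : Fin a × Fin b} : (gridGraph a b).Adj u v ↔ taxicabDist u v = 1 := by
  simp only [gridGraph, taxicabDist, Nat.dist]
  omega

lemma exists_adj_taxicabDist_succ {u v : Fin a × Fin b} (huv : u ≠ v) :
    ∃ w, (gridGraph a b).Adj u w ∧ taxicabDist w v + 1 = taxicabDist u v := by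
  simp only [adj_iff, taxicabDist]
  by_cases h1 : u.1 = v.1
  · obtain ⟨k, hk⟩ := Fin.exists_dist_eq_one_and_dist_succ fun h2 ↦ huv (Prod.ext h1 h2)
    exact ⟨(u.1, k), by simp only [h1, Nat.dist_self]; omega⟩
  · obtain ⟨k, hk⟩ := Fin.exists_dist_eq_one_and_dist_succ h1
    exact ⟨(k, u.2), by simp only [Nat.dist_self]; omega⟩

lemma exists_walk_length_eq_taxicabDist (u v : Fin a × Fin b) :
    ∃ p : (gridGraph a b).Walk u v, p.length = taxicabDist u v := by
  induction hn : taxicabDist u v generalizing u with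
  | zero =>
    obtain rfl : u = v := by
      simp only [taxicabDist, Nat.dist] at hn
      exact Prod.ext (Fin.ext (by omega)) (Fin.ext (by omega))
    exact ⟨.nil, rfl⟩
  | succ n ih =>
    have huv : u ≠ v := by rintro rfl; simp [taxicabDist] at hn
    obtain ⟨w, hadj, hw⟩ := exists_adj_taxicabDist_succ huv
    obtain ⟨p, hp⟩ := ih w (by omega)
    exact ⟨.cons hadj p, by simp [hp]⟩

lemma taxicabDist_le_length {u v : Fin a × Fin b} (p : (gridGraph a b).Walk u v) :
    taxicabDist u v ≤ p.length := by
  induction p with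
  | nil => simp [taxicabDist]
  | cons h p ih =>
    rw [adj_iff] at h
    simp only [taxicabDist, Nat.dist, SimpleGraph.Walk.length_cons] at *
    omega

theorem dist_eq_taxicabDist (u v : Fin a × Fin b) :
    (gridGraph a b).dist u v = taxicabDist u v := by
  obtain ⟨p, hp⟩ := exists_walk_length_eq_taxicabDist u v
  obtain ⟨q, hq⟩ := SimpleGraph.Reachable.exists_walk_length_eq_dist ⟨p⟩
  exact le_antisymm (hp ▸ SimpleGraph.dist_le p) (hq ▸ taxicabDist_le_length q)

end gridGraph

theorem stmt10_general (ℓ : ℕ) (x y : Fin ℓ × Fin ℓ)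
    (hdiag : (x.1 : ℕ) + (x.2 : ℕ) = (y.1 : ℕ) + (y.2 : ℕ)) (hlt : (x.1 : ℕ) < (y.1 : ℕ)) :
    {u : Fin ℓ × Fin ℓ | (gridGraph ℓ ℓ).dist u x ≠ (gridGraph ℓ ℓ).dist u y} =
      Set.univ \
        ({u : Fin ℓ × Fin ℓ | (u.1 : ℕ) ≤ (x.1 : ℕ) ∧ (u.2 : ℕ) ≤ (y.2 : ℕ)} ∪
         {u : Fin ℓ × Fin ℓ | (y.1 : ℕ) ≤ (u.1 : ℕ) ∧ (x.2 : ℕ) ≤ (u.2 : ℕ)} ∪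
         {u : Fin ℓ × Fin ℓ | ∃ j : ℕ, 0 < j ∧ j < (y.1 : ℕ) - (x.1 : ℕ) ∧
            (u.1 : ℕ) = (x.1 : ℕ) + j ∧ (u.2 : ℕ) = (y.2 : ℕ) + j}) := by
  ext u
  simp only [Set.mem_ofPred_eq, Set.mem_sdiff, Set.mem_univ, Set.mem_union, true_and, ne_eq,
    gridGraph.dist_eq_taxicabDist, gridGraph.taxicabDist]
  exact (Nat.dist_add_dist_eq_dist_add_dist_iff hlt hdiag).not

/-- for a diagonal pair `{x,y}` of the grid `G_ℓ` with `d(x,y) > 2`,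
`R(x,y) = V(G_ℓ) \ (Q₃(z) ∪ Q₁(z̃) ∪ {(x₁+j, y₂+j) : 0 < j < y₁ - x₁})` where
`z = (x₁, y₂)` and `z̃ = (y₁, x₂)`. -/
theorem stmt10 (ℓ : ℕ) (hℓ : 2 ≤ ℓ) (x y : Fin ℓ × Fin ℓ)
    (hdiag : (x.1 : ℕ) + (x.2 : ℕ) = (y.1 : ℕ) + (y.2 : ℕ)) (hlt : (x.1 : ℕ) < (y.1 : ℕ))
    (hdist : 2 < (gridGraph ℓ ℓ).dist x y) :
    {u : Fin ℓ × Fin ℓ | (gridGraph ℓ ℓ).dist u x ≠ (gridGraph ℓ ℓ).dist u y} =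
      Set.univ \
        ({u : Fin ℓ × Fin ℓ | (u.1 : ℕ) ≤ (x.1 : ℕ) ∧ (u.2 : ℕ) ≤ (y.2 : ℕ)} ∪
         {u : Fin ℓ × Fin ℓ | (y.1 : ℕ) ≤ (u.1 : ℕ) ∧ (x.2 : ℕ) ≤ (u.2 : ℕ)} ∪
         {u : Fin ℓ × Fin ℓ | ∃ j : ℕ, 0 < j ∧ j < (y.1 : ℕ) - (x.1 : ℕ) ∧
            (u.1 : ℕ) = (x.1 : ℕ) + j ∧ (u.2 : ℕ) = (y.2 : ℕ) + j}) :=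
  stmt10_general ℓ x y hdiag hlt
end

section
/- Let ℓ ≥ 2, let S be a resolving set of the grid graph G_ℓ, and let {x,y} = {(x1,x2),(y1,y2)} (with x1 < y1) be an S-unique diagonal pair with associated vertex u such that d(x,y) > 2. Then for every j with 0 ≤ j < y1 − x1, the pair {r^j, s^j} with r^j = (x1+j, y2+j+1) and s^j = (x1+j+1, y2+j) is a diagonal pair with d(r^j,s^j) = 2 that is S-unique with associated vertex u. In particular, there exist y1 − x1 distinct S-unique diagonal pairs with associated vertex u whose elements are at distance 2. -/
/-! A vertex `w` resolves the distance-two diagonal pair `rʲ, sʲ` only if `w₁ ≤ rʲ₁` and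
`w₂ ≥ rʲ₂`, or `w₁ ≥ sʲ₁` and `w₂ ≤ sʲ₂`; in both cases `w` is strictly closer to one of `x`, `y`
than to the other, so `R(rʲ, sʲ) ⊆ R(x, y)`. Hence `R(rʲ, sʲ) ∩ S ⊆ R(x, y) ∩ S = {u}`, and the left
side is nonempty because `S` is resolving. Grid distances are taxicab distances, computed through
`G_ℓ = P_ℓ □ P_ℓ`. -/

namespace SimpleGraph

variable {V : Type*} (G : SimpleGraph V)

theorem dist_eq_of_adj_le_of_exists_adj (d : V → V → ℕ) (hself : ∀ v, d v v = 0)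
    (hadj : ∀ u u' v, G.Adj u u' → d u v ≤ d u' v + 1)
    (hstep : ∀ u v, u ≠ v → ∃ u', G.Adj u u' ∧ d u' v + 1 = d u v) (u v : V) :
    G.dist u v = d u v := by
  have hlower : ∀ {u : V} (w : G.Walk u v), d u v ≤ w.length := by
    intro u w
    induction w with
    | nil => simp [hself]
    | cons h _ ih => exact (hadj _ _ _ h).trans (by simpa using ih)
  have hupper : ∀ n u, d u v = n → ∃ w : G.Walk u v, w.length = n := by
    intro n
    induction n with
    | zero =>
      intro u hu
      by_cases huv : u = v
      · subst huv; exact ⟨.nil, rfl⟩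
      · obtain ⟨u', -, hu'⟩ := hstep u v huv; omega
    | succ n ih =>
      intro u hu
      by_cases huv : u = v
      · subst huv; simp [hself] at hu
      · obtain ⟨u', hadj', hu'⟩ := hstep u v huv
        obtain ⟨w, hw⟩ := ih u' (by omega)
        exact ⟨.cons hadj' w, by simp [hw]⟩
  obtain ⟨w, hw⟩ := hupper _ u rfl
  have hreach : G.Reachable u v := ⟨w⟩
  obtain ⟨w', hw'⟩ := hreach.exists_walk_length_eq_dist
  exact le_antisymm (hw ▸ G.dist_le w) (hw' ▸ hlower w')

theorem pathGraph_dist {n : ℕ} (u v : Fin n) : (pathGraph n).dist u v = Nat.dist u v := by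
  refine dist_eq_of_adj_le_of_exists_adj _ (fun u v : Fin n ↦ Nat.dist u v)
    (fun v ↦ Nat.dist_self _) ?_ ?_ u v
  · intro u u' v h
    rw [pathGraph_adj] at h
    simp only [Nat.dist]
    omega
  · intro u v huv
    rcases lt_or_gt_of_ne (Fin.val_ne_of_ne huv) with h | h
    · refine ⟨⟨u + 1, by omega⟩, by simp [pathGraph_adj], ?_⟩
      simp only [Nat.dist]
      omega
    · refine ⟨⟨u - 1, by omega⟩, by simp [pathGraph_adj]; omega, ?_⟩
      simp only [Nat.dist]
      omega

variable {W : Type*} {H : SimpleGraph W}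

theorem Reachable.dist_boxProd {x y : V × W} (h : (G □ H).Reachable x y) :
    (G □ H).dist x y = G.dist x.1 y.1 + H.dist x.2 y.2 := by
  obtain ⟨h₁, h₂⟩ := reachable_boxProd.1 h
  apply Nat.cast_injective (R := ℕ∞)
  rw [Nat.cast_add, h.coe_dist_eq_edist, h₁.coe_dist_eq_edist, h₂.coe_dist_eq_edist,
    edist_boxProd]

end SimpleGraph

open SimpleGraph

theorem gridGraph_dist_s11 {a b : ℕ} (p q : Fin a × Fin b) :
    (gridGraph a b).dist p q = Nat.dist p.1 q.1 + Nat.dist p.2 q.2 := by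
  have hreach : (pathGraph a □ pathGraph b).Reachable p q :=
    reachable_boxProd.2 ⟨pathGraph_preconnected a _ _, pathGraph_preconnected b _ _⟩
  rw [gridGraph_eq_boxProd, hreach.dist_boxProd, pathGraph_dist, pathGraph_dist]

theorem IsResolvingSet.resolvers_inter_eq_singleton_of_subset {V : Type*} {G : SimpleGraph V}
    {S : Set V} (hS : IsResolvingSet G S) {x y r s u : V} (hrs : r ≠ s)
    (hsub : ∀ w, G.dist w r ≠ G.dist w s → G.dist w x ≠ G.dist w y)
    (hu : {w | G.dist w x ≠ G.dist w y} ∩ S = {u}) :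
    {w | G.dist w r ≠ G.dist w s} ∩ S = {u} := by
  obtain ⟨v, hvS, hv⟩ := hS r s hrs
  have hne : ({w | G.dist w r ≠ G.dist w s} ∩ S).Nonempty := ⟨v, hv, hvS⟩
  refine hne.subset_singleton_iff.1 ?_
  rw [← hu]
  exact Set.inter_subset_inter_left S hsub

-- `y₂ + a < x₁ + b` puts `(a, b)` strictly on the side of `x` of the perpendicular bisector
-- of the diagonal pair `x, y`.
theorem Nat.dist_add_dist_lt_of_add_eq {a b x₁ x₂ y₁ y₂ : ℕ} (hdiag : x₁ + x₂ = y₁ + y₂)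
    (hlt : x₁ < y₁) (ha : a < y₁) (hb : y₂ < b) (hab : y₂ + a < x₁ + b) :
    a.dist x₁ + b.dist x₂ < a.dist y₁ + b.dist y₂ := by
  simp only [Nat.dist]
  omega

theorem gridGraph_dist_ne_of_dist_ne {a b j : ℕ} {x y r s w : Fin a × Fin b}
    (hdiag : (x.1 : ℕ) + x.2 = y.1 + y.2) (hj : (x.1 : ℕ) + j < y.1)
    (hr₁ : (r.1 : ℕ) = x.1 + j) (hr₂ : (r.2 : ℕ) = y.2 + j + 1)
    (hs₁ : (s.1 : ℕ) = x.1 + j + 1) (hs₂ : (s.2 : ℕ) = y.2 + j)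
    (hw : (gridGraph a b).dist w r ≠ (gridGraph a b).dist w s) :
    (gridGraph a b).dist w x ≠ (gridGraph a b).dist w y := by
  rw [gridGraph_dist_s11, gridGraph_dist_s11] at hw ⊢
  have hquadrant :
      ((w.1 : ℕ) ≤ r.1 ∧ (r.2 : ℕ) ≤ w.2) ∨ ((s.1 : ℕ) ≤ w.1 ∧ (w.2 : ℕ) ≤ s.2) := by
    simp only [Nat.dist] at hw
    omega
  rcases hquadrant with ⟨h₁, h₂⟩ | ⟨h₁, h₂⟩
  · exact (Nat.dist_add_dist_lt_of_add_eq hdiag (by omega) (by omega) (by omega) (by omega)).ne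
  · have := Nat.dist_add_dist_lt_of_add_eq (a := w.2) (b := w.1) (x₁ := y.2) (x₂ := y.1)
      (y₁ := x.2) (y₂ := x.1) (by omega) (by omega) (by omega) (by omega) (by omega)
    omega

theorem stmt11_general (ℓ : ℕ) (S : Set (Fin ℓ × Fin ℓ))
    (hS : IsResolvingSet (gridGraph ℓ ℓ) S) (x y u : Fin ℓ × Fin ℓ)
    (hdiag : (x.1 : ℕ) + (x.2 : ℕ) = (y.1 : ℕ) + (y.2 : ℕ))
    (huniq : {w : Fin ℓ × Fin ℓ |
        (gridGraph ℓ ℓ).dist w x ≠ (gridGraph ℓ ℓ).dist w y} ∩ S = {u}) :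
    ∀ j : ℕ, j < (y.1 : ℕ) - (x.1 : ℕ) →
      ∃ r s : Fin ℓ × Fin ℓ,
        (r.1 : ℕ) = (x.1 : ℕ) + j ∧ (r.2 : ℕ) = (y.2 : ℕ) + j + 1 ∧
        (s.1 : ℕ) = (x.1 : ℕ) + j + 1 ∧ (s.2 : ℕ) = (y.2 : ℕ) + j ∧
        (r.1 : ℕ) + (r.2 : ℕ) = (s.1 : ℕ) + (s.2 : ℕ) ∧ (r.1 : ℕ) < (s.1 : ℕ) ∧
        (gridGraph ℓ ℓ).dist r s = 2 ∧
        {w : Fin ℓ × Fin ℓ |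
          (gridGraph ℓ ℓ).dist w r ≠ (gridGraph ℓ ℓ).dist w s} ∩ S = {u} := by
  intro j hj
  have hx₂ := x.2.2
  have hy₁ := y.1.2
  let r : Fin ℓ × Fin ℓ := (⟨x.1 + j, by omega⟩, ⟨y.2 + j + 1, by omega⟩)
  let s : Fin ℓ × Fin ℓ := (⟨x.1 + j + 1, by omega⟩, ⟨y.2 + j, by omega⟩)
  have hrs : r ≠ s := by simp [r, s, Prod.ext_iff]
  refine ⟨r, s, rfl, rfl, rfl, rfl, by simp only [r, s]; omega, by simp only [r, s]; omega, ?_,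
    hS.resolvers_inter_eq_singleton_of_subset hrs (fun w ↦ ?_) huniq⟩
  · simp only [gridGraph_dist_s11, Nat.dist, r, s]
    omega
  · exact gridGraph_dist_ne_of_dist_ne hdiag (by omega) rfl rfl rfl rfl

/-- if `{x,y}` is an `S`-unique diagonal pair of the grid `G_ℓ` with
associated vertex `u` and `d(x,y) > 2`, then for every `0 ≤ j < y₁ - x₁` the pair
`{rʲ, sʲ}` with `rʲ = (x₁+j, y₂+j+1)`, `sʲ = (x₁+j+1, y₂+j)` is a diagonal pair at
distance 2 which is `S`-unique with associated vertex `u`.  (This yields `y₁ - x₁`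
distinct such pairs.) -/
theorem stmt11 (ℓ : ℕ) (hℓ : 2 ≤ ℓ) (S : Set (Fin ℓ × Fin ℓ))
    (hS : IsResolvingSet (gridGraph ℓ ℓ) S) (x y u : Fin ℓ × Fin ℓ)
    (hdiag : (x.1 : ℕ) + (x.2 : ℕ) = (y.1 : ℕ) + (y.2 : ℕ)) (hlt : (x.1 : ℕ) < (y.1 : ℕ))
    (hdist : 2 < (gridGraph ℓ ℓ).dist x y)
    (huniq : {w : Fin ℓ × Fin ℓ |
        (gridGraph ℓ ℓ).dist w x ≠ (gridGraph ℓ ℓ).dist w y} ∩ S = {u}) :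
    ∀ j : ℕ, j < (y.1 : ℕ) - (x.1 : ℕ) →
      ∃ r s : Fin ℓ × Fin ℓ,
        (r.1 : ℕ) = (x.1 : ℕ) + j ∧ (r.2 : ℕ) = (y.2 : ℕ) + j + 1 ∧
        (s.1 : ℕ) = (x.1 : ℕ) + j + 1 ∧ (s.2 : ℕ) = (y.2 : ℕ) + j ∧
        (r.1 : ℕ) + (r.2 : ℕ) = (s.1 : ℕ) + (s.2 : ℕ) ∧ (r.1 : ℕ) < (s.1 : ℕ) ∧
        (gridGraph ℓ ℓ).dist r s = 2 ∧
        {w : Fin ℓ × Fin ℓ |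
          (gridGraph ℓ ℓ).dist w r ≠ (gridGraph ℓ ℓ).dist w s} ∩ S = {u} :=
  stmt11_general ℓ S hS x y u hdiag huniq
end

section
/- Let G be a finite simple connected graph with resolving number res(G) ≥ 3 which is not isomorphic to a cycle of even length. Then the diameter of G satisfies d(G) ≤ 3·res(G) − 5. -/
/-!
Every `res(G)`-set of vertices resolves `G`, so for `p ≠ q` the bisector
`{w | d(w, p) = d(w, q)}` has fewer than `res(G)` vertices. Take a diametral geodesic
`x 0, …, x d`. If a vertex `z` off it is adjacent to an interior vertex `x t`, then `d(z, x j)`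
differs from `|j - t|` by at most one, so each `x j` lies in the bisector of `z` with one of
`x (t - 1), x t, x (t + 1)`, and `x t` lies in two of them: `d + 2 ≤ 3 (res(G) - 1)`.

Otherwise the rest of `G` hangs off the two ends, and an off-path vertex is determined by its
distances `a, c` to `x 0, x d`, where `a + c ∈ {d, d + 1}`. When `2 (res(G) - 1) ≤ d` only one
of the two sums occurs, and the vertices sit isometrically on a cycle of length `d + a + c`:
either an even cycle, or an odd cycle (or a path inside it) in which no two vertices are
equidistant from a pair, contradicting `res(G) ≥ 3`.
-/

open SimpleGraph Finset

section

variable {V : Type*}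

section Bisector

variable [Fintype V] (G : SimpleGraph V)

noncomputable def bisector (p q : V) : Finset V :=
  univ.filter fun w => G.dist w p = G.dist w q

theorem card_bisector_lt_resolvingNumber {p q : V} (hpq : p ≠ q) :
    #(bisector G p q) < resolvingNumber G := by
  by_contra! h
  obtain ⟨S, hS, hcard⟩ := exists_subset_card_eq h
  have hresolving : ∀ S : Finset V, #S = resolvingNumber G → IsResolvingSet G ↑S :=
    Nat.sInf_mem (s := {k | ∀ S : Finset V, #S = k → IsResolvingSet G ↑S})
      ⟨Fintype.card V + 1, fun T hT => absurd hT (by have := T.card_le_univ; omega)⟩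
  obtain ⟨u, hu, hne⟩ := hresolving S hcard p q hpq
  exact hne (mem_filter.mp (hS hu)).2

theorem exists_le_card_bisector {k : ℕ} (hk : k < resolvingNumber G) :
    ∃ p q, p ≠ q ∧ k ≤ #(bisector G p q) := by
  have : ¬ ∀ S : Finset V, #S = k → IsResolvingSet G ↑S := fun h =>
    (Nat.sInf_le (s := {k | ∀ S : Finset V, #S = k → IsResolvingSet G ↑S}) h).not_gt hk
  simp only [IsResolvingSet] at this
  push Not at this
  obtain ⟨S, rfl, p, q, hpq, hS⟩ := this
  exact ⟨p, q, hpq, card_le_card fun u hu => mem_filter.mpr ⟨mem_univ u, hS u hu⟩⟩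

end Bisector

namespace SimpleGraph

variable {G : SimpleGraph V}

theorem Walk.dist_getVert_le {u v : V} (p : G.Walk u v) {i j : ℕ} (hij : i ≤ j) :
    G.dist (p.getVert i) (p.getVert j) ≤ j - i :=
  calc G.dist (p.getVert i) (p.getVert j)
      = G.dist (p.getVert i) ((p.drop i).getVert (j - i)) := by
        rw [Walk.drop_getVert, Nat.add_sub_cancel' hij]
    _ ≤ ((p.drop i).take (j - i)).length := dist_le _
    _ ≤ j - i := by rw [Walk.take_length]; exact min_le_left _ _

theorem Connected.exists_adj_dist_add_one (hconn : G.Connected) {u v : V} (huv : u ≠ v) :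
    ∃ w, G.Adj u w ∧ G.dist w v + 1 = G.dist u v := by
  obtain ⟨p, hp⟩ := hconn.exists_walk_length_eq_dist u v
  cases p with
  | nil => exact absurd rfl huv
  | cons h q =>
    refine ⟨_, h, le_antisymm ?_ ?_⟩
    · simpa [← hp] using dist_le q
    · calc G.dist u v ≤ G.dist u _ + G.dist _ v := hconn.dist_triangle
        _ = G.dist _ v + 1 := by rw [dist_eq_one_iff_adj.mpr h, add_comm]

end SimpleGraph

section Geodesic

variable {G : SimpleGraph V} {x : ℕ → V} {d : ℕ}

variable (G) in
def IsGeodesic (x : ℕ → V) (d : ℕ) : Prop :=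
  ∀ i j, i ≤ j → j ≤ d → G.dist (x i) (x j) = j - i

theorem exists_isGeodesic (hconn : G.Connected) (u v : V) :
    ∃ x : ℕ → V, IsGeodesic G x (G.dist u v) := by
  obtain ⟨p, hp⟩ := hconn.exists_walk_length_eq_dist u v
  refine ⟨p.getVert, fun i j hij hj => le_antisymm (p.dist_getVert_le hij) ?_⟩
  have h₁ := p.dist_getVert_le (Nat.zero_le i)
  have h₂ := p.dist_getVert_le (hj.trans_eq hp.symm)
  have h₃ := hconn.dist_triangle (u := u) (v := p.getVert i) (w := v)
  have h₄ := hconn.dist_triangle (u := p.getVert i) (v := p.getVert j) (w := v)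
  rw [Walk.getVert_zero, Walk.getVert_length] at *
  omega

namespace IsGeodesic

theorem dist_eq (hx : IsGeodesic G x d) {i j : ℕ} (hi : i ≤ d) (hj : j ≤ d) :
    G.dist (x i) (x j) = i - j + (j - i) := by
  rcases le_total i j with h | h
  · rw [hx i j h hj]; omega
  · rw [dist_comm, hx j i h hi]; omega

theorem injOn (hx : IsGeodesic G x d) : Set.InjOn x (Set.Iic d) := by
  intro i hi j hj hij
  have := hx.dist_eq hi hj
  rw [hij, dist_self] at this
  omega

theorem reverse (hx : IsGeodesic G x d) : IsGeodesic G (fun j => x (d - j)) d := by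
  intro i j hij hj
  rw [dist_comm, hx _ _ (by omega) (by omega)]
  omega

theorem card_image_range [DecidableEq V] (hx : IsGeodesic G x d) {m : ℕ} (hm : m ≤ d) :
    #((range (m + 1)).image x) = m + 1 := by
  rw [card_image_of_injOn, card_range]
  exact hx.injOn.mono fun j hj => Set.mem_Iic.mpr (by have := mem_range.mp hj; omega)

variable [Fintype V] [DecidableEq V]

theorem le_card_bisector (hx : IsGeodesic G x d) {m : ℕ} (hm : m ≤ d) {p q : V}
    (h : ∀ j ≤ m, G.dist (x j) p = G.dist (x j) q) : m + 1 ≤ #(bisector G p q) := by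
  rw [← hx.card_image_range hm]
  refine card_le_card fun w hw => ?_
  obtain ⟨j, hj, rfl⟩ := mem_image.mp hw
  exact mem_filter.mpr ⟨mem_univ _, h j (by have := mem_range.mp hj; omega)⟩

theorem add_two_le_card_bisector (hconn : G.Connected) (hx : IsGeodesic G x d) {z : V} {t : ℕ}
    (ht : 0 < t) (htd : t < d) (hz : G.Adj z (x t)) :
    d + 2 ≤ #(bisector G z (x (t - 1))) + #(bisector G z (x t)) + #(bisector G z (x (t + 1))) := by
  set A := bisector G z (x (t - 1))
  set B := bisector G z (x t)
  set C := bisector G z (x (t + 1))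
  have hzt : G.dist (x t) z = 1 := by rw [dist_comm]; exact dist_eq_one_iff_adj.mpr hz
  have mem : ∀ {s j}, s ≤ d → j ≤ d → G.dist (x j) z = j - s + (s - j) →
      x j ∈ bisector G z (x s) := fun hs hj h =>
    mem_filter.mpr ⟨mem_univ _, h.trans (hx.dist_eq hj hs).symm⟩
  have hcover : (range (d + 1)).image x ⊆ A ∪ B ∪ C := by
    intro w hw
    obtain ⟨j, hj, rfl⟩ := mem_image.mp hw
    have hj : j ≤ d := by have := mem_range.mp hj; omega
    have h₁ : G.dist (x j) z ≤ G.dist (x j) (x t) + G.dist (x t) z := hconn.dist_triangle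
    have h₂ : G.dist (x j) (x t) ≤ G.dist (x j) z + G.dist (x t) z := by
      rw [dist_comm (u := x t)]; exact hconn.dist_triangle
    rw [hx.dist_eq hj htd.le] at h₁ h₂
    have hjt : j = t → G.dist (x j) z = 1 := fun h => h ▸ hzt
    rw [mem_union, mem_union]
    rcases (by omega : G.dist (x j) z = j - (t - 1) + (t - 1 - j) ∨
        G.dist (x j) z = j - t + (t - j) ∨ G.dist (x j) z = j - (t + 1) + (t + 1 - j))
      with h | h | h
    · exact Or.inl (Or.inl (mem (by omega) hj h))
    · exact Or.inl (Or.inr (mem htd.le hj h))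
    · exact Or.inr (mem htd hj h)
  have hinter : x t ∈ A ∩ C :=
    mem_inter.mpr ⟨mem (by omega) htd.le (by omega), mem (by omega) htd.le (by omega)⟩
  calc d + 2 = #((range (d + 1)).image x) + #{x t} := by
        rw [hx.card_image_range le_rfl, card_singleton]
    _ ≤ #(A ∪ B ∪ C) + #(A ∩ C) :=
        add_le_add (card_le_card hcover) (card_le_card (singleton_subset_iff.mpr hinter))
    _ ≤ #A + #B + #C := by
        have h₁ := card_union_add_card_inter A C
        have h₂ := card_union_le (A ∪ C) B
        rw [union_right_comm] at h₂
        omega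

end IsGeodesic

end Geodesic

section CycleMetric

def cycleDist (n i j : ℕ) : ℕ := min (i - j + (j - i)) (n - (i - j + (j - i)))

theorem cycleDist_self (n i : ℕ) : cycleDist n i i = 0 := by simp [cycleDist]

theorem cycleDist_comm (n i j : ℕ) : cycleDist n i j = cycleDist n j i := by
  simp only [cycleDist, add_comm]

theorem eq_of_cycleDist_eq_cycleDist {n a b s s' : ℕ} (hn : Odd n) (ha : a < n) (hb : b < n)
    (hs : s < n) (hs' : s' < n) (hab : a ≠ b) (h : cycleDist n s a = cycleDist n s b)
    (h' : cycleDist n s' a = cycleDist n s' b) : s = s' := by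
  obtain ⟨m, rfl⟩ := hn
  unfold cycleDist at h h'
  omega

theorem cycleGraph_adj_iff_cycleDist {n : ℕ} {u v : Fin n} :
    (cycleGraph n).Adj u v ↔ cycleDist n u v = 1 := by
  rw [cycleGraph_adj', cycleDist]
  have := u.isLt
  have := v.isLt
  rcases lt_trichotomy u v with h | rfl | h
  · rw [Fin.coe_sub_iff_lt.mpr h, Fin.sub_val_of_le h.le]
    have : (u : ℕ) < v := h
    omega
  · rw [Fin.sub_val_of_le le_rfl]
    omega
  · rw [Fin.sub_val_of_le h.le, Fin.coe_sub_iff_lt.mpr h]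
    have : (v : ℕ) < u := h
    omega

variable {G : SimpleGraph V}

theorem SimpleGraph.Connected.injective_of_dist_eq (hconn : G.Connected) {f : V → ℕ}
    {δ : ℕ → ℕ → ℕ} (hδ : ∀ i, δ i i = 0) (h : ∀ v w, G.dist v w = δ (f v) (f w)) :
    Function.Injective f := fun v w hvw =>
  hconn.dist_eq_zero_iff.mp ((h v w).trans (hvw ▸ hδ (f v)))

theorem SimpleGraph.Connected.card_bisector_le_one [Fintype V] (hconn : G.Connected) {n : ℕ}
    (hn : Odd n) {f : V → ℕ} (hf : ∀ v, f v < n)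
    (h : ∀ v w, G.dist v w = cycleDist n (f v) (f w)) {p q : V} (hpq : p ≠ q) :
    #(bisector G p q) ≤ 1 := by
  have hinj := hconn.injective_of_dist_eq (cycleDist_self n) h
  refine card_le_one.mpr fun s hs s' hs' => hinj ?_
  rw [bisector, mem_filter, h, h] at hs hs'
  exact eq_of_cycleDist_eq_cycleDist hn (hf p) (hf q) (hf s) (hf s')
    (hinj.ne hpq) hs.2 hs'.2

theorem SimpleGraph.Connected.nonempty_iso_cycleGraph (hconn : G.Connected) {n : ℕ}
    {f : V → Fin n} (hf : Function.Surjective f)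
    (h : ∀ v w, G.dist v w = cycleDist n (f v) (f w)) : Nonempty (G ≃g cycleGraph n) := by
  have hinj : Function.Injective f :=
    .of_comp (hconn.injective_of_dist_eq (f := fun v => (f v : ℕ)) (cycleDist_self n) h)
  refine ⟨⟨Equiv.ofBijective f ⟨hinj, hf⟩, fun {v w} => ?_⟩⟩
  change (cycleGraph n).Adj (f v) (f w) ↔ G.Adj v w
  rw [cycleGraph_adj_iff_cycleDist, ← h, dist_eq_one_iff_adj]

end CycleMetric

section EndAttached

variable {G : SimpleGraph V} {x : ℕ → V} {d : ℕ}

variable (G) in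
structure IsEndAttachedDiameter (x : ℕ → V) (d : ℕ) : Prop where
  connected : G.Connected
  isGeodesic : IsGeodesic G x d
  dist_le : ∀ u v, G.dist u v ≤ d
  not_adj : ∀ z ∉ x '' Set.Iic d, ∀ t, 0 < t → t < d → ¬ G.Adj z (x t)

theorem image_Iic_reverse (x : ℕ → V) (d : ℕ) :
    (fun j => x (d - j)) '' Set.Iic d = x '' Set.Iic d := by
  ext v
  simp only [Set.mem_image, Set.mem_Iic]
  constructor
  · rintro ⟨j, hj, rfl⟩; exact ⟨d - j, by omega, rfl⟩
  · rintro ⟨j, hj, rfl⟩; exact ⟨d - j, by omega, by rw [Nat.sub_sub_self hj]⟩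

theorem ne_of_notMem_image_Iic {z : V} (hz : z ∉ x '' Set.Iic d) {j : ℕ} (hj : j ≤ d) :
    z ≠ x j :=
  fun h => hz ⟨j, hj, h.symm⟩

-- `x j` sits at `j`, and an off-path vertex at distance `a` from `x 0` at `n - a`, on the arc
-- closing the cycle from `x d` back to `x 0`.
open Classical in
variable (G) in
noncomputable def cyclePos (x : ℕ → V) (d n : ℕ) (v : V) : ℕ :=
  if v ∈ x '' Set.Iic d then G.dist (x 0) v else n - G.dist v (x 0)

namespace IsEndAttachedDiameter

theorem reverse (hP : IsEndAttachedDiameter G x d) :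
    IsEndAttachedDiameter G (fun j => x (d - j)) d where
  connected := hP.connected
  isGeodesic := hP.isGeodesic.reverse
  dist_le := hP.dist_le
  not_adj z hz t ht htd := by
    rw [image_Iic_reverse] at hz
    exact hP.not_adj z hz (d - t) (by omega) (by omega)

theorem dist_pos (hP : IsEndAttachedDiameter G x d) {z : V} (hz : z ∉ x '' Set.Iic d) {j : ℕ}
    (hj : j ≤ d) : 0 < G.dist z (x j) :=
  hP.connected.pos_dist_of_ne (ne_of_notMem_image_Iic hz hj)

theorem le_dist_add_dist (hP : IsEndAttachedDiameter G x d) (z : V) :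
    d ≤ G.dist z (x 0) + G.dist z (x d) := by
  have := hP.connected.dist_triangle (u := x 0) (v := z) (w := x d)
  rw [hP.isGeodesic 0 d (Nat.zero_le d) le_rfl, dist_comm] at this
  omega

theorem dist_eq_min (hP : IsEndAttachedDiameter G x d) {z : V} (hz : z ∉ x '' Set.Iic d)
    {j : ℕ} (hj : j ≤ d) :
    G.dist z (x j) = min (G.dist z (x 0) + j) (G.dist z (x d) + (d - j)) := by
  have hx := hP.isGeodesic
  refine le_antisymm (le_min ?_ ?_) ?_
  · exact hP.connected.dist_triangle.trans_eq (by rw [hx.dist_eq (Nat.zero_le d) hj]; omega)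
  · exact hP.connected.dist_triangle.trans_eq (by rw [hx.dist_eq le_rfl hj]; omega)
  suffices ∀ n, ∀ z ∉ x '' Set.Iic d, G.dist z (x j) = n →
      min (G.dist z (x 0) + j) (G.dist z (x d) + (d - j)) ≤ n from this _ z hz rfl
  intro n
  induction n with
  | zero =>
    intro z hz h
    exact absurd (hP.connected.dist_eq_zero_iff.mp h) (ne_of_notMem_image_Iic hz hj)
  | succ n ih =>
    intro z hz h
    obtain ⟨y, hzy, hy⟩ := hP.connected.exists_adj_dist_add_one (ne_of_notMem_image_Iic hz hj)
    have hzy' : G.dist z y = 1 := dist_eq_one_iff_adj.mpr hzy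
    by_cases hyP : y ∈ x '' Set.Iic d
    · obtain ⟨i, hi : i ≤ d, rfl⟩ := hyP
      have hend : i = 0 ∨ i = d := by
        by_contra!
        exact hP.not_adj z hz i (by omega) (by omega) hzy
      rw [hx.dist_eq hi hj] at hy
      rcases hend with rfl | rfl <;> omega
    · have := ih y hyP (by omega)
      have h₀ := hP.connected.dist_triangle (u := z) (v := y) (w := x 0)
      have h₁ := hP.connected.dist_triangle (u := z) (v := y) (w := x d)
      omega

theorem dist_add_dist_le (hP : IsEndAttachedDiameter G x d) {z : V} (hz : z ∉ x '' Set.Iic d) :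
    G.dist z (x 0) + G.dist z (x d) ≤ d + 1 := by
  have := hP.le_dist_add_dist z
  have := hP.dist_le z (x 0)
  have := hP.dist_le z (x d)
  have hmid := hP.dist_eq_min hz (j := (G.dist z (x d) + d - G.dist z (x 0)) / 2) (by omega)
  have := hP.dist_le z (x ((G.dist z (x d) + d - G.dist z (x 0)) / 2))
  omega

theorem exists_adj_notMem (hP : IsEndAttachedDiameter G x d) {z : V}
    (hz : z ∉ x '' Set.Iic d) (h : 2 ≤ G.dist z (x 0)) :
    ∃ y ∉ x '' Set.Iic d, G.Adj z y ∧ G.dist y (x 0) + 1 = G.dist z (x 0) := by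
  obtain ⟨y, hzy, hy⟩ := hP.connected.exists_adj_dist_add_one (ne_of_notMem_image_Iic hz (Nat.zero_le d))
  refine ⟨y, ?_, hzy, hy⟩
  rintro ⟨i, hi : i ≤ d, rfl⟩
  rw [hP.isGeodesic.dist_eq hi (Nat.zero_le d)] at hy
  have := hP.dist_le z (x 0)
  exact hP.not_adj z hz i (by omega) (by omega) hzy

theorem exists_dist_eq_of_le (hP : IsEndAttachedDiameter G x d) {z : V}
    (hz : z ∉ x '' Set.Iic d) (hzd : G.dist z (x 0) + G.dist z (x d) = d) {α : ℕ} (hα : 1 ≤ α)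
    (hαz : α ≤ G.dist z (x 0)) :
    ∃ w ∉ x '' Set.Iic d, G.dist w (x 0) = α ∧ G.dist w (x d) = d - α := by
  obtain ⟨k, hk⟩ : ∃ k, G.dist z (x 0) = α + k := ⟨_, (Nat.add_sub_cancel' hαz).symm⟩
  induction k generalizing z with
  | zero => exact ⟨z, hz, by omega, by omega⟩
  | succ k ih =>
    obtain ⟨y, hy, hzy, hya⟩ := hP.exists_adj_notMem hz (by omega)
    have := hP.le_dist_add_dist y
    have := hP.connected.dist_triangle (u := y) (v := z) (w := x d)
    rw [dist_comm (u := y) (v := z), dist_eq_one_iff_adj.mpr hzy] at this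
    exact ih hy (by omega) (by omega) (by omega)

theorem exists_dist_eq (hP : IsEndAttachedDiameter G x d) {z : V} (hz : z ∉ x '' Set.Iic d)
    (hzd : G.dist z (x 0) + G.dist z (x d) = d) {α : ℕ} (hα : 1 ≤ α) (hαd : α < d) :
    ∃ w ∉ x '' Set.Iic d, G.dist w (x 0) = α ∧ G.dist w (x d) = d - α := by
  rcases le_total α (G.dist z (x 0)) with h | h
  · exact hP.exists_dist_eq_of_le hz hzd hα h
  · obtain ⟨w, hw, h₀, h₁⟩ := hP.reverse.exists_dist_eq_of_le (z := z) (by rwa [image_Iic_reverse])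
      (by simp only [Nat.sub_zero, Nat.sub_self]; omega) (α := d - α) (by omega)
      (by simp only [Nat.sub_zero]; omega)
    rw [image_Iic_reverse] at hw
    simp only [Nat.sub_zero, Nat.sub_self] at h₀ h₁
    exact ⟨w, hw, by omega, by omega⟩

theorem cyclePos_apply (hP : IsEndAttachedDiameter G x d) {n j : ℕ} (hj : j ≤ d) :
    cyclePos G x d n (x j) = j := by
  rw [cyclePos, if_pos ⟨j, hj, rfl⟩, hP.isGeodesic 0 j (Nat.zero_le j) hj, Nat.sub_zero]

theorem cyclePos_of_notMem {n : ℕ} {v : V} (hv : v ∉ x '' Set.Iic d) :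
    cyclePos G x d n v = n - G.dist v (x 0) := by
  rw [cyclePos, if_neg hv]

theorem cyclePos_lt (hP : IsEndAttachedDiameter G x d) {n : ℕ} (hn : d < n) (v : V) :
    cyclePos G x d n v < n := by
  by_cases hv : v ∈ x '' Set.Iic d
  · obtain ⟨j, hj, rfl⟩ := hv
    rw [hP.cyclePos_apply hj]
    exact lt_of_le_of_lt hj hn
  · rw [cyclePos_of_notMem hv]
    have := hP.dist_pos hv (Nat.zero_le d)
    omega

variable [Fintype V] [DecidableEq V]

theorem le_card_bisector_of_dist_eq (hP : IsEndAttachedDiameter G x d) {z z' : V} (hz : z ∉ x '' Set.Iic d)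
    (hz' : z' ∉ x '' Set.Iic d) (h₀ : G.dist z (x 0) = G.dist z' (x 0))
    (h₁ : G.dist z (x d) = G.dist z' (x d)) : d + 1 ≤ #(bisector G z z') :=
  hP.isGeodesic.le_card_bisector le_rfl fun j hj => by
    rw [dist_comm, hP.dist_eq_min hz hj, dist_comm (u := x j), hP.dist_eq_min hz' hj, h₀, h₁]

-- The witness `w` has the same distance to `x 0` as `z` and one less to `x d`, so `z` and `w`
-- are equidistant from `x 0, …, x (d - a)`.
theorem exists_le_card_bisector_of_dist_add_dist_eq (hP : IsEndAttachedDiameter G x d)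
    {z₀ z : V} (hz₀ : z₀ ∉ x '' Set.Iic d) (hz₀d : G.dist z₀ (x 0) + G.dist z₀ (x d) = d)
    (hz : z ∉ x '' Set.Iic d) (hzd : G.dist z (x 0) + G.dist z (x d) = d + 1)
    (hzd' : G.dist z (x 0) < d) :
    ∃ w, z ≠ w ∧ d + 1 - G.dist z (x 0) ≤ #(bisector G z w) := by
  have ha := hP.dist_pos hz (Nat.zero_le d)
  obtain ⟨w, hw, h₀, h₁⟩ := hP.exists_dist_eq hz₀ hz₀d ha hzd'
  refine ⟨w, fun h => by subst h; omega, ?_⟩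
  have := hP.isGeodesic.le_card_bisector (m := d - G.dist z (x 0)) (by omega) (p := z) (q := w)
    fun j hj => by
      rw [dist_comm, hP.dist_eq_min hz (by omega), dist_comm (u := x j),
        hP.dist_eq_min hw (by omega), h₀, h₁]
      omega
  omega

theorem dist_add_dist_eq (hP : IsEndAttachedDiameter G x d)
    (hbis : ∀ p q, p ≠ q → 2 * #(bisector G p q) ≤ d) {z₀ z : V} (hz₀ : z₀ ∉ x '' Set.Iic d)
    (hz₀d : G.dist z₀ (x 0) + G.dist z₀ (x d) = d) (hz : z ∉ x '' Set.Iic d) :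
    G.dist z (x 0) + G.dist z (x d) = d := by
  by_contra hne
  have hzd : G.dist z (x 0) + G.dist z (x d) = d + 1 := by
    have := hP.le_dist_add_dist z
    have := hP.dist_add_dist_le hz
    omega
  have := hP.dist_pos hz₀ (Nat.zero_le d)
  have := hP.dist_pos hz₀ le_rfl
  have h₀ : G.dist z (x 0) < d → 2 * (d + 1 - G.dist z (x 0)) ≤ d := fun h => by
    obtain ⟨w, hw, hcard⟩ := hP.exists_le_card_bisector_of_dist_add_dist_eq hz₀ hz₀d hz hzd h
    have := hbis z w hw
    omega
  have h₁ : G.dist z (x d) < d → 2 * (d + 1 - G.dist z (x d)) ≤ d := fun h => by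
    obtain ⟨w, hw, hcard⟩ := hP.reverse.exists_le_card_bisector_of_dist_add_dist_eq (z₀ := z₀)
      (z := z) (by rwa [image_Iic_reverse]) (by simp only [Nat.sub_zero, Nat.sub_self]; omega)
      (by rwa [image_Iic_reverse]) (by simp only [Nat.sub_zero, Nat.sub_self]; omega)
      (by simp only [Nat.sub_zero]; omega)
    simp only [Nat.sub_zero] at hcard
    have := hbis z w hw
    omega
  omega

theorem dist_eq_of_notMem (hP : IsEndAttachedDiameter G x d)
    (hbis : ∀ p q, p ≠ q → #(bisector G p q) ≤ d) {n : ℕ}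
    (huni : ∀ z ∉ x '' Set.Iic d, G.dist z (x 0) + G.dist z (x d) + d = n) {z z' : V}
    (hz : z ∉ x '' Set.Iic d) (hz' : z' ∉ x '' Set.Iic d) :
    G.dist z z' = G.dist z (x 0) - G.dist z' (x 0) + (G.dist z' (x 0) - G.dist z (x 0)) := by
  have hle : ∀ {z z'}, z ∉ x '' Set.Iic d → z' ∉ x '' Set.Iic d →
      G.dist z (x 0) ≤ G.dist z' (x 0) → G.dist z z' ≤ G.dist z' (x 0) - G.dist z (x 0) := by
    intro z z' hz hz' h
    obtain ⟨k, hk⟩ : ∃ k, G.dist z' (x 0) = G.dist z (x 0) + k :=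
      ⟨_, (Nat.add_sub_cancel' h).symm⟩
    induction k generalizing z' with
    | zero =>
      obtain rfl : z = z' := by
        by_contra hne
        have := huni z hz
        have := huni z' hz'
        have := hP.le_card_bisector_of_dist_eq hz hz' (by omega) (by omega)
        have := hbis z z' hne
        omega
      simp
    | succ k ih =>
      have := hP.dist_pos hz (Nat.zero_le d)
      obtain ⟨y, hy, hzy, hya⟩ := hP.exists_adj_notMem hz' (by omega)
      have := ih hy (by omega) (by omega)
      have := hP.connected.dist_triangle (u := z) (v := y) (w := z')
      rw [dist_comm (u := y) (v := z'), dist_eq_one_iff_adj.mpr hzy] at this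
      omega
  have h₀ : G.dist z (x 0) ≤ G.dist z z' + G.dist z' (x 0) := hP.connected.dist_triangle
  have h₁ : G.dist z' (x 0) ≤ G.dist z z' + G.dist z (x 0) := by
    rw [G.dist_comm (u := z)]; exact hP.connected.dist_triangle
  rcases le_total (G.dist z (x 0)) (G.dist z' (x 0)) with h | h
  · have := hle hz hz' h
    omega
  · have := hle hz' hz h
    rw [G.dist_comm] at this
    omega

theorem dist_eq_cycleDist (hP : IsEndAttachedDiameter G x d)
    (hbis : ∀ p q, p ≠ q → #(bisector G p q) ≤ d) {n : ℕ} (hn : 2 * d ≤ n)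
    (huni : ∀ z ∉ x '' Set.Iic d, G.dist z (x 0) + G.dist z (x d) + d = n) (v w : V) :
    G.dist v w = cycleDist n (cyclePos G x d n v) (cyclePos G x d n w) := by
  have hpos : ∀ {z}, z ∉ x '' Set.Iic d →
      0 < G.dist z (x 0) ∧ 0 < G.dist z (x d) ∧ G.dist z (x 0) + G.dist z (x d) + d = n :=
    fun hz => ⟨hP.dist_pos hz (Nat.zero_le d),
      hP.dist_pos hz le_rfl, huni _ hz⟩
  have hoff : ∀ {z}, z ∉ x '' Set.Iic d → ∀ j ≤ d,
      G.dist z (x j) = cycleDist n (cyclePos G x d n z) j := by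
    intro z hz j hj
    rw [hP.dist_eq_min hz hj, cyclePos_of_notMem hz, cycleDist]
    have := hpos hz
    omega
  by_cases hv : v ∈ x '' Set.Iic d <;> by_cases hw : w ∈ x '' Set.Iic d
  · obtain ⟨i, hi : i ≤ d, rfl⟩ := hv
    obtain ⟨j, hj : j ≤ d, rfl⟩ := hw
    rw [hP.isGeodesic.dist_eq hi hj, hP.cyclePos_apply hi, hP.cyclePos_apply hj, cycleDist]
    omega
  · obtain ⟨i, hi, rfl⟩ := hv
    rw [G.dist_comm, hoff hw i hi, hP.cyclePos_apply hi, cycleDist_comm]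
  · obtain ⟨j, hj, rfl⟩ := hw
    rw [hoff hv j hj, hP.cyclePos_apply hj]
  · have := hpos hv
    have := hpos hw
    have := hP.dist_add_dist_le hv
    rw [hP.dist_eq_of_notMem hbis huni hv hw, cyclePos_of_notMem hv, cyclePos_of_notMem hw,
      cycleDist]
    omega

theorem even_cycle_or_card_bisector_le_one (hP : IsEndAttachedDiameter G x d)
    (hbis : ∀ p q, p ≠ q → 2 * #(bisector G p q) ≤ d) :
    (∃ n, 4 ≤ n ∧ Even n ∧ Nonempty (G ≃g cycleGraph n)) ∨
      ∀ p q, p ≠ q → #(bisector G p q) ≤ 1 := by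
  have hbis' : ∀ p q, p ≠ q → #(bisector G p q) ≤ d := fun p q h => by
    have := hbis p q h
    omega
  by_cases hW : ∃ z₀ ∉ x '' Set.Iic d, G.dist z₀ (x 0) + G.dist z₀ (x d) = d
  · obtain ⟨z₀, hz₀, hz₀d⟩ := hW
    have := hP.dist_pos hz₀ (Nat.zero_le d)
    have := hP.dist_pos hz₀ le_rfl
    have huni : ∀ z ∉ x '' Set.Iic d, G.dist z (x 0) + G.dist z (x d) + d = 2 * d :=
      fun z hz => by rw [hP.dist_add_dist_eq hbis hz₀ hz₀d hz]; ring
    refine .inl ⟨2 * d, by omega, even_two_mul d,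
      hP.connected.nonempty_iso_cycleGraph
        (f := fun v => ⟨cyclePos G x d (2 * d) v, hP.cyclePos_lt (by omega) v⟩) ?_
        (hP.dist_eq_cycleDist hbis' le_rfl huni)⟩
    rintro ⟨m, hm⟩
    rcases le_or_gt m d with h | h
    · exact ⟨x m, Fin.ext (hP.cyclePos_apply h)⟩
    · obtain ⟨w, hw, h₀, -⟩ := hP.exists_dist_eq hz₀ hz₀d (α := 2 * d - m) (by omega) (by omega)
      exact ⟨w, Fin.ext (by simp only [cyclePos_of_notMem hw, h₀]; omega)⟩
  · push Not at hW
    have huni : ∀ z ∉ x '' Set.Iic d, G.dist z (x 0) + G.dist z (x d) + d = 2 * d + 1 :=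
      fun z hz => by
        have := hW z hz
        have := hP.le_dist_add_dist z
        have := hP.dist_add_dist_le hz
        omega
    exact .inr fun p q hpq => hP.connected.card_bisector_le_one (odd_two_mul_add_one d)
      (hP.cyclePos_lt (by omega)) (hP.dist_eq_cycleDist hbis' (by omega) huni) hpq

end IsEndAttachedDiameter

end EndAttached

end

/-- if `G` is a finite simple connected graph with `res(G) ≥ 3` which is
not isomorphic to an even cycle, then its diameter satisfies `d(G) ≤ 3·res(G) - 5`. -/
theorem stmt17 {V : Type*} [Fintype V] [DecidableEq V] (G : SimpleGraph V)
    (hconn : G.Connected) (hres : 3 ≤ resolvingNumber G)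
    (hcyc : ¬ ∃ n : ℕ, 4 ≤ n ∧ Even n ∧ Nonempty (G ≃g SimpleGraph.cycleGraph n)) :
    G.diam ≤ 3 * resolvingNumber G - 5 := by
  by_contra! hdiam
  have hbis := fun {p q : V} (h : p ≠ q) => card_bisector_lt_resolvingNumber G h
  have := hconn.nonempty
  obtain ⟨u, v, huv⟩ := G.exists_dist_eq_diam
  obtain ⟨x, hx⟩ := exists_isGeodesic hconn u v
  rw [huv] at hx
  by_cases hattach : ∃ z ∉ x '' Set.Iic G.diam, ∃ t, 0 < t ∧ t < G.diam ∧ G.Adj z (x t)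
  · obtain ⟨z, hz, t, ht, htd, hzt⟩ := hattach
    have := hx.add_two_le_card_bisector hconn ht htd hzt
    have := hbis (ne_of_notMem_image_Iic hz (j := t - 1) (by omega))
    have := hbis (ne_of_notMem_image_Iic hz (j := t) (by omega))
    have := hbis (ne_of_notMem_image_Iic hz (j := t + 1) (by omega))
    omega
  push Not at hattach
  have hP : IsEndAttachedDiameter G x G.diam :=
    ⟨hconn, hx, fun _ _ => dist_le_diam (connected_iff_ediam_ne_top.mp hconn), hattach⟩
  rcases hP.even_cycle_or_card_bisector_le_one fun p q h => by have := hbis h; omega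
    with hcycle | hbis₁
  · exact hcyc hcycle
  · obtain ⟨p, q, hpq, h₂⟩ := exists_le_card_bisector G (k := 2) (by omega)
    have := hbis₁ p q hpq
    omega
end

section
/- For every integer a ≥ 4, every finite simple connected graph G with res(G) = a has order at most (3a − 5)^a + a; in particular, for every a ≥ 4 the set of connected graphs with resolving number a is finite (up to isomorphism). -/
/-!
Since every `a`-subset of `V` resolves `G`, each bisector `{u | d(u, x) = d(u, y)}` with `x ≠ y`
has at most `a - 1` vertices; since some `(a - 1)`-subset does not, some bisector has at least
`a - 1 ≥ 3` vertices.

In a connected graph of maximum degree at most two (a path or a cycle) every bisector has at most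
two vertices: spheres of positive radius have at most two vertices, which forces any two points
`u ≠ v` of the bisector of `x, y` to satisfy `d(u, v) = d(u, x) + d(v, x)`; but geodesics from
three such points to `x` enter `x` through at most two neighbours, and two sharing one violate
this identity.

Hence `G` has a vertex `b` with three neighbours `z₁, z₂, z₃`. For any `u` the three distances
`d(u, zᵢ)` lie in `{d(u, b) - 1, d(u, b), d(u, b) + 1}`, so two of them agree or one equals
`d(u, b)`: the six bisectors of pairs from `{b, z₁, z₂, z₃}` cover `V`, and `|V| ≤ 6 (a - 1)`.
-/

namespace SimpleGraph

variable {V : Type*} {G : SimpleGraph V} {u v w x y z : V}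

theorem Connected.exists_dist_eq_of_le_dist (hc : G.Connected) {k : ℕ} (hk : k ≤ G.dist u w) :
    ∃ z, G.dist u z = k ∧ G.dist z w = G.dist u w - k := by
  obtain ⟨p, hp⟩ := hc.exists_walk_length_eq_dist u w
  have hu := dist_le (p.take k)
  have hw := dist_le (p.drop k)
  rw [Walk.take_length] at hu
  rw [Walk.drop_length] at hw
  have := hc.dist_triangle (u := u) (v := p.getVert k) (w := w)
  exact ⟨p.getVert k, by omega, by omega⟩

theorem Connected.exists_adj_dist_eq (hc : G.Connected) {k : ℕ} (h : G.dist u w = k + 1) :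
    ∃ c, G.Adj c w ∧ G.dist u c = k := by
  obtain ⟨c, huc, hcw⟩ := hc.exists_dist_eq_of_le_dist (u := u) (w := w) (k := k) (by omega)
  exact ⟨c, dist_eq_one_iff_adj.mp (by omega), huc⟩

/-- The vertices that do not resolve the pair `{x, y}`. -/
noncomputable def bisector [Fintype V] (G : SimpleGraph V) (x y : V) : Finset V :=
  Finset.univ.filter fun u => G.dist u x = G.dist u y

section bisector

variable [Fintype V]

@[simp]
theorem mem_bisector : u ∈ G.bisector x y ↔ G.dist u x = G.dist u y := by
  simp [bisector]

theorem bisector_comm (x y : V) : G.bisector x y = G.bisector y x := by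
  ext u
  simp only [mem_bisector, eq_comm]

theorem Connected.dist_ne_zero_of_mem_bisector (hc : G.Connected) (hxy : x ≠ y)
    (hu : u ∈ G.bisector x y) : G.dist u x ≠ 0 := by
  intro h
  rw [mem_bisector, h, eq_comm, hc.dist_eq_zero_iff] at hu
  exact hxy ((hc.dist_eq_zero_iff.mp h).symm.trans hu)

end bisector

section MaxDegreeTwo

variable [Fintype V] [DecidableRel G.Adj]

theorem eq_or_eq_or_eq_of_adj (hdeg : ∀ v, G.degree v ≤ 2) {w₁ w₂ w₃ : V} (h₁ : G.Adj v w₁)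
    (h₂ : G.Adj v w₂) (h₃ : G.Adj v w₃) : w₁ = w₂ ∨ w₁ = w₃ ∨ w₂ = w₃ := by
  by_contra! h
  have : 2 < (G.neighborFinset v).card :=
    Finset.two_lt_card.mpr ⟨w₁, by simpa, w₂, by simpa, w₃, by simpa, h⟩
  have := hdeg v
  rw [← card_neighborFinset_eq_degree] at this
  omega

theorem Connected.eq_or_eq_or_eq_of_dist_eq (hc : G.Connected) (hdeg : ∀ v, G.degree v ≤ 2)
    {r : ℕ} (hr : r ≠ 0) {w₁ w₂ w₃ : V} (h₁ : G.dist v w₁ = r) (h₂ : G.dist v w₂ = r)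
    (h₃ : G.dist v w₃ = r) : w₁ = w₂ ∨ w₁ = w₃ ∨ w₂ = w₃ := by
  induction r generalizing w₁ w₂ w₃ with
  | zero => contradiction
  | succ r ih =>
    rcases Nat.eq_zero_or_pos r with rfl | hpos
    · exact eq_or_eq_or_eq_of_adj hdeg (dist_eq_one_iff_adj.mp h₁)
        (dist_eq_one_iff_adj.mp h₂) (dist_eq_one_iff_adj.mp h₃)
    -- a vertex at distance `r` has a neighbour at distance `r - 1`, so at most one more further out
    have merge : ∀ {a b c : V}, G.Adj c a → G.Adj c b → G.dist v a = r + 1 →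
        G.dist v b = r + 1 → G.dist v c = r → a = b := by
      intro a b c ha hb hda hdb hdc
      obtain ⟨c', hc'c, hdc'⟩ := hc.exists_adj_dist_eq (show G.dist v c = (r - 1) + 1 by omega)
      rcases eq_or_eq_or_eq_of_adj hdeg ha hb hc'c.symm with h | rfl | rfl
      · exact h
      · omega
      · omega
    obtain ⟨c₁, adj₁, d₁⟩ := hc.exists_adj_dist_eq h₁
    obtain ⟨c₂, adj₂, d₂⟩ := hc.exists_adj_dist_eq h₂
    obtain ⟨c₃, adj₃, d₃⟩ := hc.exists_adj_dist_eq h₃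
    rcases ih hpos.ne' d₁ d₂ d₃ with rfl | rfl | rfl
    · exact .inl (merge adj₁ adj₂ h₁ h₂ d₁)
    · exact .inr (.inl (merge adj₁ adj₃ h₁ h₃ d₁))
    · exact .inr (.inr (merge adj₂ adj₃ h₂ h₃ d₂))

theorem Connected.not_adj_of_mem_bisector (hc : G.Connected) (hdeg : ∀ v, G.degree v ≤ 2)
    (hxy : x ≠ y) (hv : v ∈ G.bisector x y) (hw : w ∈ G.bisector x y)
    (hvw : G.dist v x = G.dist w x + 1) : ¬ G.Adj v w := by
  induction h : G.dist w x generalizing v w with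
  | zero => exact absurd h (hc.dist_ne_zero_of_mem_bisector hxy hw)
  | succ n ih =>
    intro hadj
    obtain ⟨c₁, hc₁w, hc₁⟩ := hc.exists_adj_dist_eq (show G.dist x w = n + 1 by rw [dist_comm, h])
    obtain ⟨c₂, hc₂w, hc₂⟩ :=
      hc.exists_adj_dist_eq (show G.dist y w = n + 1 by rw [dist_comm, ← mem_bisector.mp hw, h])
    rw [dist_comm] at hc₁ hc₂
    rw [mem_bisector] at hv
    rcases eq_or_eq_or_eq_of_adj hdeg hadj.symm hc₁w.symm hc₂w.symm with rfl | rfl | rfl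
    · omega
    · omega
    · exact ih hw (mem_bisector.mpr (hc₁.trans hc₂.symm)) (by omega) hc₁ hc₁w.symm

theorem Connected.eq_of_mem_bisector_of_dist_add_dist (hc : G.Connected)
    (hdeg : ∀ v, G.degree v ≤ 2) (hxy : x ≠ y) (hu : u ∈ G.bisector x y)
    (hz : z ∈ G.bisector x y) (h : G.dist u z + G.dist z x = G.dist u x) : u = z := by
  by_contra hne
  have hpos := hc.pos_dist_of_ne hne
  obtain ⟨c, huc, hcz⟩ := hc.exists_dist_eq_of_le_dist (u := u) (w := z) (k := 1) hpos
  have hcx : G.dist c x + 1 = G.dist u x := by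
    have := hc.dist_triangle (u := c) (v := z) (w := x)
    have := hc.dist_triangle (u := u) (v := c) (w := x)
    omega
  have hcy : G.dist c y + 1 = G.dist u y := by
    rw [mem_bisector] at hu hz
    have := hc.dist_triangle (u := c) (v := z) (w := y)
    have := hc.dist_triangle (u := u) (v := c) (w := y)
    omega
  have hcb : c ∈ G.bisector x y := by
    rw [mem_bisector] at hu ⊢
    omega
  exact hc.not_adj_of_mem_bisector hdeg hxy hu hcb hcx.symm (dist_eq_one_iff_adj.mp huc)

theorem Connected.dist_le_dist_of_mem_bisector (hc : G.Connected) (hdeg : ∀ v, G.degree v ≤ 2)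
    (hxy : x ≠ y) (huv : u ≠ v) (hu : u ∈ G.bisector x y) (hv : v ∈ G.bisector x y) :
    G.dist u x ≤ G.dist u v := by
  by_contra! hlt
  have hpos := hc.pos_dist_of_ne huv
  have hu' := mem_bisector.mp hu
  obtain ⟨zx, hzx, hzxx⟩ := hc.exists_dist_eq_of_le_dist (u := u) (w := x) hlt.le
  obtain ⟨zy, hzy, hzyy⟩ := hc.exists_dist_eq_of_le_dist (u := u) (w := y) (hu' ▸ hlt.le)
  rcases hc.eq_or_eq_or_eq_of_dist_eq hdeg hpos.ne' hzx hzy rfl with rfl | rfl | rfl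
  · have hz : zx ∈ G.bisector x y := by rw [mem_bisector]; omega
    obtain rfl := hc.eq_of_mem_bisector_of_dist_add_dist hdeg hxy hu hz (by omega)
    rw [dist_self] at hzx
    omega
  · exact huv (hc.eq_of_mem_bisector_of_dist_add_dist hdeg hxy hu hv (by omega))
  · rw [bisector_comm] at hu hv
    exact huv (hc.eq_of_mem_bisector_of_dist_add_dist hdeg hxy.symm hu hv (by omega))

theorem Connected.dist_eq_add_of_mem_bisector (hc : G.Connected) (hdeg : ∀ v, G.degree v ≤ 2)
    (hxy : x ≠ y) (huv : u ≠ v) (hu : u ∈ G.bisector x y) (hv : v ∈ G.bisector x y) :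
    G.dist u v = G.dist u x + G.dist v x := by
  have hle := hc.dist_le_dist_of_mem_bisector hdeg hxy huv hu hv
  obtain ⟨z, huz, hzv⟩ := hc.exists_dist_eq_of_le_dist hle
  have hr := hc.dist_ne_zero_of_mem_bisector hxy hu
  rw [mem_bisector] at hu hv
  rcases hc.eq_or_eq_or_eq_of_dist_eq hdeg hr rfl hu.symm huz with h | rfl | rfl
  · exact absurd h hxy
  · rw [dist_comm] at hzv; omega
  · rw [dist_comm] at hzv; omega

theorem Connected.card_bisector_le_two (hc : G.Connected) (hdeg : ∀ v, G.degree v ≤ 2)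
    (hxy : x ≠ y) : (G.bisector x y).card ≤ 2 := by
  by_contra! h
  obtain ⟨w₁, h₁, w₂, h₂, w₃, h₃, h₁₂, h₁₃, h₂₃⟩ := Finset.two_lt_card.mp h
  -- two of the three geodesics from the `wᵢ` to `x` enter `x` through the same neighbour
  have hpred : ∀ {w}, w ∈ G.bisector x y → ∃ c, G.Adj c x ∧ G.dist w c + 1 = G.dist w x := by
    intro w hw
    have hr := hc.dist_ne_zero_of_mem_bisector hxy hw
    obtain ⟨c, hcx, hwc⟩ := hc.exists_adj_dist_eq (u := w) (w := x) (k := G.dist w x - 1) (by omega)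
    exact ⟨c, hcx, by omega⟩
  have hshared : ∀ {w w' c}, w ∈ G.bisector x y → w' ∈ G.bisector x y → w ≠ w' →
      G.dist w c + 1 = G.dist w x → G.dist w' c + 1 = G.dist w' x → False := by
    intro w w' c hw hw' hne hwc hw'c
    have := hc.dist_eq_add_of_mem_bisector hdeg hxy hne hw hw'
    have := hc.dist_triangle (u := w) (v := c) (w := w')
    rw [dist_comm (u := c)] at this
    omega
  obtain ⟨c₁, adj₁, d₁⟩ := hpred h₁
  obtain ⟨c₂, adj₂, d₂⟩ := hpred h₂
  obtain ⟨c₃, adj₃, d₃⟩ := hpred h₃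
  rcases eq_or_eq_or_eq_of_adj hdeg adj₁.symm adj₂.symm adj₃.symm with rfl | rfl | rfl
  · exact hshared h₁ h₂ h₁₂ d₁ d₂
  · exact hshared h₁ h₃ h₁₃ d₁ d₃
  · exact hshared h₂ h₃ h₂₃ d₂ d₃

end MaxDegreeTwo

theorem card_le_six_mul_of_card_bisector_le [Fintype V] [DecidableEq V] {m : ℕ}
    (hm : ∀ x y, x ≠ y → (G.bisector x y).card ≤ m) {b z₁ z₂ z₃ : V} (h₁ : G.Adj b z₁)
    (h₂ : G.Adj b z₂) (h₃ : G.Adj b z₃) (h₁₂ : z₁ ≠ z₂) (h₁₃ : z₁ ≠ z₃) (h₂₃ : z₂ ≠ z₃) :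
    Fintype.card V ≤ 6 * m := by
  set pairs : Finset (V × V) := {(z₁, z₂), (z₁, z₃), (z₂, z₃), (z₁, b), (z₂, b), (z₃, b)}
  have hcover : (Finset.univ : Finset V) ⊆ pairs.biUnion fun e => G.bisector e.1 e.2 := by
    intro u _
    have d₁ := h₁.diff_dist_adj (u := u)
    have d₂ := h₂.diff_dist_adj (u := u)
    have d₃ := h₃.diff_dist_adj (u := u)
    simp only [pairs, Finset.mem_biUnion, Finset.mem_insert, Finset.mem_singleton,
      exists_eq_or_imp, exists_eq_left, mem_bisector]
    omega
  have hbound : ∀ e ∈ pairs, (G.bisector e.1 e.2).card ≤ m := by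
    simp only [pairs, Finset.mem_insert, Finset.mem_singleton]
    rintro e (rfl | rfl | rfl | rfl | rfl | rfl)
    exacts [hm _ _ h₁₂, hm _ _ h₁₃, hm _ _ h₂₃, hm _ _ h₁.ne.symm, hm _ _ h₂.ne.symm,
      hm _ _ h₃.ne.symm]
  calc Fintype.card V = (Finset.univ : Finset V).card := Finset.card_univ.symm
    _ ≤ (pairs.biUnion fun e => G.bisector e.1 e.2).card := Finset.card_le_card hcover
    _ ≤ pairs.card * m := Finset.card_biUnion_le_card_mul _ _ _ hbound
    _ ≤ 6 * m := Nat.mul_le_mul_right _ Finset.card_le_six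

section resolvingNumber

variable [Fintype V]

theorem isResolvingSet_of_card_eq_resolvingNumber {S : Finset V}
    (hS : S.card = resolvingNumber G) : IsResolvingSet G S := by
  have hne : {k | ∀ S : Finset V, S.card = k → IsResolvingSet G S}.Nonempty :=
    ⟨Fintype.card V + 1, fun S hS => by have := S.card_le_univ; omega⟩
  exact Nat.sInf_mem hne S hS

theorem card_bisector_lt_resolvingNumber (hxy : x ≠ y) :
    (G.bisector x y).card < resolvingNumber G := by
  by_contra! h
  obtain ⟨T, hT, hTcard⟩ := Finset.exists_subset_card_eq h
  obtain ⟨u, hu, hne⟩ := isResolvingSet_of_card_eq_resolvingNumber hTcard x y hxy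
  exact hne (mem_bisector.mp (hT hu))

theorem exists_resolvingNumber_le_card_bisector_add_one (h : resolvingNumber G ≠ 0) :
    ∃ x y, x ≠ y ∧ resolvingNumber G ≤ (G.bisector x y).card + 1 := by
  have : resolvingNumber G - 1 ∉ {k | ∀ S : Finset V, S.card = k → IsResolvingSet G S} :=
    Nat.notMem_of_lt_sInf (show resolvingNumber G - 1 < resolvingNumber G by omega)
  simp only [Set.mem_ofPred_eq, IsResolvingSet] at this
  push Not at this
  obtain ⟨S, hS, x, y, hxy, hall⟩ := this
  have hsub : S ⊆ G.bisector x y := fun u hu => mem_bisector.mpr (hall u hu)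
  exact ⟨x, y, hxy, by have := Finset.card_le_card hsub; omega⟩

end resolvingNumber

end SimpleGraph

open SimpleGraph in
theorem stmt18_general {V : Type*} [Fintype V] (G : SimpleGraph V)
    (hconn : G.Connected) (a : ℕ) (ha : 4 ≤ a) (hres : resolvingNumber G = a) :
    Fintype.card V ≤ (3 * a - 5) ^ a + a := by
  classical
  have hsmall : ∀ x y, x ≠ y → (G.bisector x y).card ≤ a - 1 := fun x y hxy =>
    hres ▸ Nat.le_sub_one_of_lt (card_bisector_lt_resolvingNumber hxy)
  obtain ⟨p, q, hpq, hlarge⟩ := exists_resolvingNumber_le_card_bisector_add_one (G := G) (by omega)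
  rw [hres] at hlarge
  obtain ⟨b, hb⟩ : ∃ b, 2 < G.degree b := by
    by_contra! hdeg
    have := hconn.card_bisector_le_two hdeg hpq
    omega
  rw [← card_neighborFinset_eq_degree, Finset.two_lt_card] at hb
  obtain ⟨z₁, h₁, z₂, h₂, z₃, h₃, h₁₂, h₁₃, h₂₃⟩ := hb
  rw [mem_neighborFinset] at h₁ h₂ h₃
  calc Fintype.card V ≤ 6 * (a - 1) :=
        card_le_six_mul_of_card_bisector_le hsmall h₁ h₂ h₃ h₁₂ h₁₃ h₂₃
    _ ≤ 7 * (3 * a - 5) := by omega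
    _ ≤ (3 * a - 5) ^ 2 := by rw [sq]; exact Nat.mul_le_mul_right _ (by omega)
    _ ≤ (3 * a - 5) ^ a := Nat.pow_le_pow_right (by omega) (by omega)
    _ ≤ (3 * a - 5) ^ a + a := Nat.le_add_right _ _

/-- for every integer `a ≥ 4`, every finite simple connected graph with
resolving number `a` has order at most `(3a - 5)^a + a`; hence the set of connected
graphs with resolving number `a` is finite up to isomorphism. -/
theorem stmt18 {V : Type*} [Fintype V] [DecidableEq V] (G : SimpleGraph V)
    (hconn : G.Connected) (a : ℕ) (ha : 4 ≤ a) (hres : resolvingNumber G = a) :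
    Fintype.card V ≤ (3 * a - 5) ^ a + a :=
  stmt18_general G hconn a ha hres
end
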